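/- arXiv:2406.05252 — 7 statements merged into one kernel-verified Lean document; each statement's English description precedes it below -/
import Mathlib

section
/- Let p ≥ 1 be an integer, τ_s > 0, and let F : ℝ → ℝ be measurable, even, integrable on ℝ, with 0 ≤ F(t) ≤ F(0) = 1 for all t. Define F_p(T) = T^{−p} ∫_{[0,T]^p} ∑_{π ∈ S_p} ∏_{j=1}^{p} F((t_j − t_{π(j)})/τ_s)² dt₁…dt_p, where the sum runs over all permutations π of {1,…,p}. Then F_p(T) → 1 as T → ∞; i.e., the identity permutation contributes exactly 1 and every term corresponding to a non-identity permutation tends to 0. -/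
open MeasureTheory Filter Set Equiv

/-!
Write `H x = F (x / τ) ^ 2`, so that `0 ≤ H ≤ 1 = H 0` and `H` is integrable. The identity
permutation contributes the constant `1`. For `π ≠ 1` pick `i` with `π i ≠ i`; bounding every
other factor by `1`, the average over `[0, T]^p` is at most that of `H (t i - t (π i))`, and
integrating first in `t i` shows this is at most `(∫ H) / T`.
-/

noncomputable def cubeAverage (n : ℕ) (T : ℝ) (f : (Fin n → ℝ) → ℝ) : ℝ :=
  (1 / T ^ n) * ∫ t in Icc (0 : Fin n → ℝ) (fun _ => T), f t

theorem volume_restrict_Icc_pi {ι : Type*} [Fintype ι] (a b : ι → ℝ) :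
    (volume : Measure (ι → ℝ)).restrict (Icc a b)
      = Measure.pi fun i => volume.restrict (Icc (a i) (b i)) := by
  rw [← pi_univ_Icc, volume_pi, Measure.restrict_pi_pi]

theorem cubeAverage_const {n : ℕ} {T : ℝ} (hT : 0 < T) (c : ℝ) :
    cubeAverage n T (fun _ => c) = c := by
  rw [cubeAverage, setIntegral_const, smul_eq_mul, measureReal_def,
    Real.volume_Icc_pi_toReal (a := 0) (b := fun _ => T) fun _ => hT.le]
  simp [hT.ne']

theorem integrableOn_Icc_of_le_one {ι : Type*} [Fintype ι] {f : (ι → ℝ) → ℝ}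
    (hf : Measurable f) (hf0 : ∀ t, 0 ≤ f t) (hf1 : ∀ t, f t ≤ 1) (a b : ι → ℝ) :
    IntegrableOn f (Icc a b) :=
  Measure.integrableOn_of_bounded (M := 1) measure_Icc_lt_top.ne hf.aestronglyMeasurable
    (ae_of_all _ fun t => (Real.norm_of_nonneg (hf0 t)).trans_le (hf1 t))

theorem setIntegral_Icc_pi_comp_sub_le {n : ℕ} {H : ℝ → ℝ} {C : ℝ} (hH : Measurable H)
    (hH0 : ∀ x, 0 ≤ H x) (hHC : ∀ x, H x ≤ C) (hHint : Integrable H)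
    {i j : Fin (n + 1)} (hji : j ≠ i) {T : ℝ} (hT : 0 ≤ T) :
    ∫ t in Icc (0 : Fin (n + 1) → ℝ) (fun _ => T), H (t i - t j)
      ≤ (∫ x, H x) * T ^ n := by
  obtain ⟨m, rfl⟩ := Fin.exists_succAbove_eq hji
  set μ : Measure ℝ := volume.restrict (Icc 0 T)
  have : IsFiniteMeasure μ := isFiniteMeasure_restrict.2 measure_Icc_lt_top.ne
  have hinner (y : Fin n → ℝ) : ∫ x, H (x - y m) ∂μ ≤ ∫ x, H x :=
    (setIntegral_le_integral (hHint.comp_sub_right (y m)) (ae_of_all _ fun _ => hH0 _)).trans_eq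
      (integral_sub_right_eq_self H (y m))
  have hprod : Integrable (fun z : ℝ × (Fin n → ℝ) => H (z.1 - z.2 m))
      (μ.prod (Measure.pi fun _ => μ)) :=
    (integrable_const C).mono' (hH.comp (by fun_prop)).aestronglyMeasurable
      (ae_of_all _ fun z => (Real.norm_of_nonneg (hH0 _)).trans_le (hHC _))
  calc ∫ t in Icc (0 : Fin (n + 1) → ℝ) (fun _ => T), H (t i - t (i.succAbove m))
      = ∫ z, H (z.1 - z.2 m) ∂μ.prod (Measure.pi fun _ => μ) := by
        rw [volume_restrict_Icc_pi]
        exact (measurePreserving_piFinSuccAbove (fun _ => μ) i).integral_comp'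
          fun z : ℝ × (Fin n → ℝ) => H (z.1 - z.2 m)
    _ = ∫ y : Fin n → ℝ, ∫ x, H (x - y m) ∂μ ∂Measure.pi fun _ => μ :=
        integral_prod_symm _ hprod
    _ ≤ ∫ _ : Fin n → ℝ, (∫ x, H x) ∂Measure.pi fun _ => μ :=
        integral_mono_of_nonneg (ae_of_all _ fun _ => integral_nonneg fun _ => hH0 _)
          (integrable_const _) (ae_of_all _ hinner)
    _ = (∫ x, H x) * T ^ n := by
        simp [μ, measureReal_def, Measure.pi_univ, hT, mul_comm]

section Permutations

variable {n : ℕ} {H : ℝ → ℝ}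

theorem cubeAverage_prod_perm_one (hH : H 0 = 1) {T : ℝ} (hT : 0 < T) :
    cubeAverage n T (fun t => ∏ j, H (t j - t ((1 : Perm (Fin n)) j))) = 1 := by
  simpa [hH] using cubeAverage_const (n := n) hT 1

theorem integrableOn_prod_perm (hHm : Measurable H) (hH0 : ∀ x, 0 ≤ H x)
    (hH1 : ∀ x, H x ≤ 1) (π : Perm (Fin n)) (a b : Fin n → ℝ) :
    IntegrableOn (fun t => ∏ j, H (t j - t (π j))) (Icc a b) :=
  integrableOn_Icc_of_le_one (Finset.measurable_prod _ fun j _ => hHm.comp (by fun_prop))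
    (fun _ => Finset.prod_nonneg fun j _ => hH0 _)
    (fun _ => Finset.prod_le_one (fun j _ => hH0 _) fun j _ => hH1 _) a b

theorem tendsto_cubeAverage_prod_perm_of_ne_one (hHm : Measurable H) (hH0 : ∀ x, 0 ≤ H x)
    (hH1 : ∀ x, H x ≤ 1) (hHint : Integrable H) {π : Perm (Fin n)} (hπ : π ≠ 1) :
    Tendsto (fun T => cubeAverage n T fun t => ∏ j, H (t j - t (π j))) atTop (nhds 0) := by
  obtain ⟨i, hi⟩ : ∃ i, π i ≠ i := not_forall.1 fun h => hπ (Equiv.ext h)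
  obtain ⟨m, rfl⟩ := Nat.exists_eq_succ_of_ne_zero i.pos.ne'
  have hprod_le (t : Fin (m + 1) → ℝ) : ∏ j, H (t j - t (π j)) ≤ H (t i - t (π i)) := by
    simpa using Finset.prod_le_prod_of_subset_of_le_one (Finset.subset_univ {i})
      (fun j _ => hH0 _) fun j _ _ => hH1 _
  have hbound : ∀ᶠ T in atTop,
      (cubeAverage (m + 1) T fun t => ∏ j, H (t j - t (π j))) ≤ (∫ x, H x) / T := by
    filter_upwards [eventually_gt_atTop 0] with T hT
    calc (cubeAverage (m + 1) T fun t => ∏ j, H (t j - t (π j)))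
        ≤ 1 / T ^ (m + 1) *
            ∫ t in Icc (0 : Fin (m + 1) → ℝ) (fun _ => T), H (t i - t (π i)) := by
          refine mul_le_mul_of_nonneg_left (setIntegral_mono_on ?_ ?_ measurableSet_Icc
            fun t _ => hprod_le t) (by positivity)
          · exact integrableOn_prod_perm hHm hH0 hH1 π _ _
          · exact integrableOn_Icc_of_le_one (hHm.comp (by fun_prop)) (fun _ => hH0 _)
              (fun _ => hH1 _) _ _
      _ ≤ 1 / T ^ (m + 1) * ((∫ x, H x) * T ^ m) := by
          gcongr
          exact setIntegral_Icc_pi_comp_sub_le hHm hH0 hH1 hHint hi hT.le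
      _ = (∫ x, H x) / T := by field_simp; ring
  have hnonneg :
      ∀ᶠ T in atTop, 0 ≤ cubeAverage (m + 1) T fun t => ∏ j, H (t j - t (π j)) := by
    filter_upwards [eventually_gt_atTop 0] with T hT
    exact mul_nonneg (by positivity)
      (setIntegral_nonneg measurableSet_Icc fun t _ => Finset.prod_nonneg fun j _ => hH0 _)
  exact tendsto_of_tendsto_of_tendsto_of_le_of_le' tendsto_const_nhds
    (tendsto_const_nhds.div_atTop tendsto_id) hnonneg hbound

theorem tendsto_cubeAverage_sum_perm (hHm : Measurable H) (hH0 : ∀ x, 0 ≤ H x)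
    (hH1 : ∀ x, H x ≤ 1) (hH : H 0 = 1) (hHint : Integrable H) :
    Tendsto (fun T => cubeAverage n T fun t => ∑ π : Perm (Fin n), ∏ j, H (t j - t (π j)))
      atTop (nhds 1) := by
  have hterm (π : Perm (Fin n)) :
      Tendsto (fun T => cubeAverage n T fun t => ∏ j, H (t j - t (π j))) atTop
        (nhds (if π = 1 then 1 else 0)) := by
    split_ifs with hπ
    · subst hπ
      exact tendsto_const_nhds.congr' <| (eventually_gt_atTop 0).mono fun T hT =>
        (cubeAverage_prod_perm_one hH hT).symm
    · exact tendsto_cubeAverage_prod_perm_of_ne_one hHm hH0 hH1 hHint hπ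
  have hsum (T : ℝ) :
      (cubeAverage n T fun t => ∑ π : Perm (Fin n), ∏ j, H (t j - t (π j)))
      = ∑ π : Perm (Fin n), cubeAverage n T fun t => ∏ j, H (t j - t (π j)) := by
    rw [cubeAverage, integral_finsetSum _ fun π _ => integrableOn_prod_perm hHm hH0 hH1 π _ _,
      Finset.mul_sum]
    rfl
  simpa [hsum] using tendsto_finsetSum Finset.univ fun π _ => hterm π

end Permutations

theorem Fp_tendsto_one_at_top_general (p : ℕ) (τs : ℝ) (hτ : 0 < τs)
    (F : ℝ → ℝ) (hFmeas : Measurable F)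
    (hFint : Integrable F)
    (hFnonneg : ∀ t : ℝ, 0 ≤ F t) (hFle : ∀ t : ℝ, F t ≤ F 0) (hF0 : F 0 = 1) :
    Tendsto (fun T : ℝ =>
        (1 / T ^ p) * ∫ t in Set.Icc (0 : Fin p → ℝ) (fun _ => T),
          ∑ π : Equiv.Perm (Fin p), ∏ j, (F ((t j - t (π j)) / τs)) ^ 2)
      atTop (nhds 1)
    ∧ (∀ T : ℝ, 0 < T →
        (1 / T ^ p) * ∫ t in Set.Icc (0 : Fin p → ℝ) (fun _ => T),
          ∏ j, (F ((t j - t ((1 : Equiv.Perm (Fin p)) j)) / τs)) ^ 2 = 1)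
    ∧ ∀ π : Equiv.Perm (Fin p), π ≠ 1 →
        Tendsto (fun T : ℝ =>
          (1 / T ^ p) * ∫ t in Set.Icc (0 : Fin p → ℝ) (fun _ => T),
            ∏ j, (F ((t j - t (π j)) / τs)) ^ 2) atTop (nhds 0) := by
  have hF1 (t : ℝ) : F t ≤ 1 := hF0 ▸ hFle t
  have hHm : Measurable fun x => F (x / τs) ^ 2 :=
    (hFmeas.comp (measurable_id.div_const τs)).pow_const 2
  have hH0 (x : ℝ) : 0 ≤ F (x / τs) ^ 2 := sq_nonneg _
  have hH1 (x : ℝ) : F (x / τs) ^ 2 ≤ 1 := pow_le_one₀ (hFnonneg _) (hF1 _)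
  have hH : F (0 / τs) ^ 2 = 1 := by simp [hF0]
  have hHint : Integrable fun x => F (x / τs) ^ 2 := by
    refine (hFint.comp_div hτ.ne').mono' hHm.aestronglyMeasurable (ae_of_all _ fun x => ?_)
    rw [Real.norm_of_nonneg (hH0 x), sq]
    exact mul_le_of_le_one_left (hFnonneg _) (hF1 _)
  exact ⟨tendsto_cubeAverage_sum_perm (H := fun x => F (x / τs) ^ 2) hHm hH0 hH1 hH hHint,
    fun T hT => cubeAverage_prod_perm_one (H := fun x => F (x / τs) ^ 2) hH hT,
    fun π hπ => tendsto_cubeAverage_prod_perm_of_ne_one (H := fun x => F (x / τs) ^ 2)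
      hHm hH0 hH1 hHint hπ⟩

/-- The time-averaging factor `F_p(T)` tends to `1` as the averaging time `T → ∞`:
the identity permutation contributes exactly `1` for every `T > 0`, and every term
corresponding to a non-identity permutation tends to `0`. -/
theorem Fp_tendsto_one_at_top (p : ℕ) (hp : 1 ≤ p) (τs : ℝ) (hτ : 0 < τs)
    (F : ℝ → ℝ) (hFmeas : Measurable F) (hFeven : ∀ t : ℝ, F (-t) = F t)
    (hFint : Integrable F)
    (hFnonneg : ∀ t : ℝ, 0 ≤ F t) (hFle : ∀ t : ℝ, F t ≤ F 0) (hF0 : F 0 = 1) :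
    Tendsto (fun T : ℝ =>
        (1 / T ^ p) * ∫ t in Set.Icc (0 : Fin p → ℝ) (fun _ => T),
          ∑ π : Equiv.Perm (Fin p), ∏ j, (F ((t j - t (π j)) / τs)) ^ 2)
      atTop (nhds 1)
    ∧ (∀ T : ℝ, 0 < T →
        (1 / T ^ p) * ∫ t in Set.Icc (0 : Fin p → ℝ) (fun _ => T),
          ∏ j, (F ((t j - t ((1 : Equiv.Perm (Fin p)) j)) / τs)) ^ 2 = 1)
    ∧ ∀ π : Equiv.Perm (Fin p), π ≠ 1 →
        Tendsto (fun T : ℝ =>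
          (1 / T ^ p) * ∫ t in Set.Icc (0 : Fin p → ℝ) (fun _ => T),
            ∏ j, (F ((t j - t (π j)) / τs)) ^ 2) atTop (nhds 0) :=
  Fp_tendsto_one_at_top_general p τs hτ F hFmeas hFint hFnonneg hFle hF0
end

section
/- Let τ_s > 0 and let F : ℝ → ℝ be measurable, even, integrable on ℝ, continuous at 0, with 0 ≤ F(t) ≤ F(0) = 1 for all t. Define F_T = T^{−2} ∫_0^T ∫_0^T F((t₁ − t₂)/τ_s)² dt₁ dt₂. Then F_T → 1 as T → 0⁺ and F_T → 0 as T → ∞. -/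
/-!
Write `G t = F (t / τs) ^ 2`, so that `F_T` is the mean of `G (t₁ - t₂)` over the square
`[0, T]²`. As `T → 0⁺` the square shrinks onto the diagonal, where `G (t₁ - t₂)` is close to
`G 0 = 1` by continuity of `G` at `0`. As `T → ∞`, each inner integral `∫₀ᵀ G (t₁ - t₂) dt₂` is
an integral of `G` over an interval, hence at most `‖G‖₁`, so the mean is `O(1 / T)`.
-/

open MeasureTheory Filter Topology
open scoped Interval

theorem MeasureTheory.LocallyIntegrable.intervalIntegrable {E : Type*} [NormedAddCommGroup E]
    {f : ℝ → E} {μ : Measure ℝ} (hf : LocallyIntegrable f μ) (a b : ℝ) :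
    IntervalIntegrable f μ a b :=
  (hf.integrableOn_isCompact isCompact_uIcc).intervalIntegrable

noncomputable def squareAverage (G : ℝ → ℝ) (T : ℝ) : ℝ :=
  (1 / T ^ 2) * ∫ t₁ in (0:ℝ)..T, ∫ t₂ in (0:ℝ)..T, G (t₁ - t₂)

section squareAverage

variable {G : ℝ → ℝ}

theorem continuous_intervalIntegral_comp_sub (hG : LocallyIntegrable G) (a b : ℝ) :
    Continuous fun s => ∫ t in a..b, G (s - t) := by
  have hG_ii := hG.intervalIntegrable
  have h_primitive : (fun s => ∫ t in a..b, G (s - t))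
      = fun s => (∫ x in (0:ℝ)..(s - a), G x) - ∫ x in (0:ℝ)..(s - b), G x := by
    funext s
    rw [intervalIntegral.integral_comp_sub_left,
      intervalIntegral.integral_interval_sub_left (hG_ii _ _) (hG_ii _ _)]
  rw [h_primitive]
  have h_cont := intervalIntegral.continuous_primitive hG_ii 0
  exact (h_cont.comp (continuous_id.sub continuous_const)).sub
    (h_cont.comp (continuous_id.sub continuous_const))

theorem abs_intervalIntegral_comp_sub_le (hG : Integrable G) (s T : ℝ) :
    |∫ t in (0:ℝ)..T, G (s - t)| ≤ ∫ t, |G t| := by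
  rw [intervalIntegral.integral_comp_sub_left, ← Real.norm_eq_abs,
    intervalIntegral.norm_integral_eq_norm_integral_uIoc]
  exact (norm_integral_le_integral_norm _).trans
    (setIntegral_le_integral hG.norm (ae_of_all _ fun _ => norm_nonneg _))

theorem abs_squareAverage_le (hG : Integrable G) {T : ℝ} (hT : T ≠ 0) :
    |squareAverage G T| ≤ (∫ t, |G t|) / |T| := by
  have h_outer : ‖∫ t₁ in (0:ℝ)..T, ∫ t₂ in (0:ℝ)..T, G (t₁ - t₂)‖ ≤ (∫ t, |G t|) * |T - 0| :=
    intervalIntegral.norm_integral_le_of_norm_le_const fun s _ =>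
      abs_intervalIntegral_comp_sub_le hG s T
  rw [Real.norm_eq_abs, sub_zero] at h_outer
  have hT_pos : 0 < |T| := abs_pos.mpr hT
  calc |squareAverage G T|
      = |∫ t₁ in (0:ℝ)..T, ∫ t₂ in (0:ℝ)..T, G (t₁ - t₂)| / |T| ^ 2 := by
        rw [squareAverage, abs_mul, sq_abs, abs_of_pos (by positivity)]; ring
    _ ≤ (∫ t, |G t|) * |T| / |T| ^ 2 := by gcongr
    _ = (∫ t, |G t|) / |T| := by field_simp

theorem tendsto_squareAverage_atTop (hG : Integrable G) :
    Tendsto (squareAverage G) atTop (𝓝 0) := by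
  refine squeeze_zero_norm' ?_
    ((tendsto_const_nhds (x := ∫ t, |G t|)).div_atTop tendsto_abs_atTop_atTop)
  filter_upwards [eventually_ne_atTop 0] with T hT
  exact abs_squareAverage_le hG hT

theorem abs_squareAverage_sub_le (hG : LocallyIntegrable G) {T c ε : ℝ} (hT : T ≠ 0)
    (hε : ∀ t, |t| ≤ |T| → |G t - c| ≤ ε) : |squareAverage G T - c| ≤ ε := by
  have h_inner : ∀ s,
      ∫ t in (0:ℝ)..T, (G (s - t) - c) = (∫ t in (0:ℝ)..T, G (s - t)) - T * c := by
    intro s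
    rw [intervalIntegral.integral_sub _ intervalIntegrable_const, intervalIntegral.integral_const,
      sub_zero, smul_eq_mul]
    simpa using (hG.intervalIntegrable (s - 0) (s - T)).comp_sub_left s
  have h_center : squareAverage G T - c
      = (1 / T ^ 2) * ∫ s in (0:ℝ)..T, ∫ t in (0:ℝ)..T, (G (s - t) - c) := by
    simp only [h_inner, squareAverage]
    rw [intervalIntegral.integral_sub
      ((continuous_intervalIntegral_comp_sub hG 0 T).intervalIntegrable _ _)
      intervalIntegrable_const, intervalIntegral.integral_const]
    field_simp
    ring
  have h_dist : ∀ s ∈ Ι (0:ℝ) T, ∀ t ∈ Ι (0:ℝ) T, |s - t| ≤ |T| := fun s hs t ht => by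
    simpa using Set.abs_sub_le_of_uIcc_subset_uIcc
      (Set.uIcc_subset_uIcc (Set.uIoc_subset_uIcc ht) (Set.uIoc_subset_uIcc hs))
  have h_bound : |∫ s in (0:ℝ)..T, ∫ t in (0:ℝ)..T, (G (s - t) - c)| ≤ ε * |T| * |T| := by
    have h := intervalIntegral.norm_integral_le_of_norm_le_const fun s hs =>
      intervalIntegral.norm_integral_le_of_norm_le_const (f := fun t => G (s - t) - c)
        fun t ht => hε _ (h_dist s hs t ht)
    simpa [mul_assoc] using h
  have hT_sq : (0:ℝ) < T ^ 2 := by positivity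
  rw [h_center, abs_mul, abs_of_pos (one_div_pos.mpr hT_sq)]
  calc 1 / T ^ 2 * |∫ s in (0:ℝ)..T, ∫ t in (0:ℝ)..T, (G (s - t) - c)|
      ≤ 1 / T ^ 2 * (ε * |T| * |T|) := by gcongr
    _ = ε := by rw [mul_assoc, ← sq, sq_abs]; field_simp

theorem tendsto_squareAverage_nhdsNE (hG : LocallyIntegrable G) (hG0 : ContinuousAt G 0) :
    Tendsto (squareAverage G) (𝓝[≠] 0) (𝓝 (G 0)) := by
  rw [Metric.tendsto_nhdsWithin_nhds]
  intro ε hε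
  obtain ⟨δ, hδ, hδG⟩ := Metric.continuousAt_iff.mp hG0 (ε / 2) (half_pos hε)
  refine ⟨δ, hδ, fun T hT hTδ => ?_⟩
  rw [Real.dist_eq, sub_zero] at hTδ
  rw [Real.dist_eq]
  refine (abs_squareAverage_sub_le hG hT fun t ht => ?_).trans_lt (half_lt_self hε)
  simpa [Real.dist_eq] using (hδG (by simpa [Real.dist_eq] using ht.trans_lt hTδ)).le

end squareAverage

theorem FT_limits_general (τs : ℝ) (hτ : 0 < τs) (F : ℝ → ℝ)
    (hFint : Integrable F)
    (hFcont : ContinuousAt F 0)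
    (hFnonneg : ∀ t : ℝ, 0 ≤ F t) (hFle : ∀ t : ℝ, F t ≤ F 0) (hF0 : F 0 = 1) :
    Tendsto (fun T : ℝ => (1 / T ^ 2) *
        ∫ t₁ in (0:ℝ)..T, ∫ t₂ in (0:ℝ)..T, (F ((t₁ - t₂) / τs)) ^ 2)
      (nhdsWithin 0 (Set.Ioi 0)) (nhds 1)
    ∧ Tendsto (fun T : ℝ => (1 / T ^ 2) *
        ∫ t₁ in (0:ℝ)..T, ∫ t₂ in (0:ℝ)..T, (F ((t₁ - t₂) / τs)) ^ 2)
      atTop (nhds 0) := by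
  have hF_abs : ∀ t, |F t| ≤ 1 := fun t =>
    abs_le.mpr ⟨by linarith [hFnonneg t], hF0 ▸ hFle t⟩
  have hFτ_int : Integrable fun t => F (t / τs) := hFint.comp_div hτ.ne'
  have hG_int : Integrable fun t => F (t / τs) ^ 2 :=
    hFτ_int.mono (hFτ_int.aestronglyMeasurable.pow 2) (ae_of_all _ fun t => by
      simpa only [norm_pow, Real.norm_eq_abs] using
        pow_le_of_le_one (abs_nonneg _) (hF_abs (t / τs)) two_ne_zero)
  have hG_cont : ContinuousAt (fun t => F (t / τs) ^ 2) 0 :=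
    (hFcont.comp_of_eq (continuous_id.div_const τs).continuousAt (zero_div τs)).pow 2
  have h_small := (tendsto_squareAverage_nhdsNE hG_int.locallyIntegrable hG_cont).mono_left
    (nhdsGT_le_nhdsNE 0)
  rw [zero_div, hF0, one_pow] at h_small
  have h_large := tendsto_squareAverage_atTop hG_int
  exact ⟨h_small, h_large⟩

/-- The second-order time-averaging factor `F_T` tends to `1` as `T → 0⁺` and to `0`
as `T → ∞`. -/
theorem FT_limits (τs : ℝ) (hτ : 0 < τs) (F : ℝ → ℝ) (hFmeas : Measurable F)
    (hFeven : ∀ t : ℝ, F (-t) = F t) (hFint : Integrable F)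
    (hFcont : ContinuousAt F 0)
    (hFnonneg : ∀ t : ℝ, 0 ≤ F t) (hFle : ∀ t : ℝ, F t ≤ F 0) (hF0 : F 0 = 1) :
    Tendsto (fun T : ℝ => (1 / T ^ 2) *
        ∫ t₁ in (0:ℝ)..T, ∫ t₂ in (0:ℝ)..T, (F ((t₁ - t₂) / τs)) ^ 2)
      (nhdsWithin 0 (Set.Ioi 0)) (nhds 1)
    ∧ Tendsto (fun T : ℝ => (1 / T ^ 2) *
        ∫ t₁ in (0:ℝ)..T, ∫ t₂ in (0:ℝ)..T, (F ((t₁ - t₂) / τs)) ^ 2)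
      atTop (nhds 0) :=
  FT_limits_general τs hτ F hFint hFcont hFnonneg hFle hF0
end

section
/- Let Ξ be a symmetric negative definite real d × d matrix, θ > 0, and let Γ : ℝ^d × ℝ^d → ℝ be a Schwartz function with Γ(r,0) ≥ 0 for all r and ∫_{ℝ^d} Γ(r,0) dr > 0. Set J(x,y) = Γ((x+y)/2, (x−y)/θ), and define, for z > 0 and r ∈ ℝ^d, E(z,r) = (12/z³)^{d/2} (2π)^{−d/2} |det Ξ|^{−1/2} ∫_{ℝ^d} exp((6/z³)(r−x)ᵀΞ⁻¹(r−x)) J(x,x) dx and χ(z,r) = (12/z³)^{d} (2π)^{−d} |det Ξ|^{−1} ∫_{ℝ^{2d}} exp((6/z³)[(r−x)ᵀΞ⁻¹(r−x) + (r−y)ᵀΞ⁻¹(r−y)]) J(x,y)² dx dy. Then for every fixed r, lim_{z→∞} χ(z,r)/E(z,r)² = θ^d (∫_{ℝ^{2d}} Γ(r′,σ′)² dr′dσ′) / (∫_{ℝ^d} Γ(r′,0) dr′)². -/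
open Matrix MeasureTheory Filter

/-- Limiting average intensity `E[I](z,r)` in the diffusive regime with `β = 1`. -/
noncomputable def avgIntensity {d : ℕ} (Ξ : Matrix (Fin d) (Fin d) ℝ)
    (J : (Fin d → ℝ) → (Fin d → ℝ) → ℝ) (z : ℝ) (r : Fin d → ℝ) : ℝ :=
  (12 / z ^ 3) ^ ((d : ℝ) / 2) * (2 * Real.pi) ^ (-(d : ℝ) / 2) *
    |Ξ.det| ^ (-(1 : ℝ) / 2) *
    ∫ x : Fin d → ℝ,
      Real.exp ((6 / z ^ 3) * ((r - x) ⬝ᵥ Ξ⁻¹.mulVec (r - x))) * J x x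

/-- Cross-correlation component `χ(z,r)` of the limiting second moment of intensity. -/
noncomputable def crossCorr {d : ℕ} (Ξ : Matrix (Fin d) (Fin d) ℝ)
    (J : (Fin d → ℝ) → (Fin d → ℝ) → ℝ) (z : ℝ) (r : Fin d → ℝ) : ℝ :=
  (12 / z ^ 3) ^ (d : ℝ) * (2 * Real.pi) ^ (-(d : ℝ)) * |Ξ.det|⁻¹ *
    ∫ q : (Fin d → ℝ) × (Fin d → ℝ),
      Real.exp ((6 / z ^ 3) * (((r - q.1) ⬝ᵥ Ξ⁻¹.mulVec (r - q.1))
        + ((r - q.2) ⬝ᵥ Ξ⁻¹.mulVec (r - q.2)))) * (J q.1 q.2) ^ 2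

/-!
The Gaussian weight `exp((6/z³) Q)` has `Q ≤ 0` because `Ξ` is negative definite, so it is
bounded by `1` and tends to `1` pointwise as `z → ∞`; by dominated convergence both Gaussian
integrals tend to the plain integrals `∫ J(x,x) = ∫ Γ(x,0)` and `∫ J²`. The normalising prefactor
of `χ` is exactly the square of that of `E`, so it cancels in `χ/E²`. Finally
`(x,y) ↦ ((x+y)/2, (x-y)/θ)` is a shear followed by a scaling of the second factor by `θ⁻¹`, so it
multiplies Lebesgue measure on `ℝᵈ × ℝᵈ` by `θ^d`, which turns `∫ J²` into `θ^d ∫ Γ²`.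
-/

open Module

theorem tendsto_integral_exp_mul_mul_of_nonpos {α ι : Type*} [MeasurableSpace α] {μ : Measure α}
    {l : Filter ι} [l.IsCountablyGenerated] {c : ι → ℝ} {Q g : α → ℝ}
    (hc : Tendsto c l (nhds 0)) (hc0 : ∀ᶠ i in l, 0 ≤ c i)
    (hQm : AEMeasurable Q μ) (hQ : ∀ x, Q x ≤ 0) (hg : Integrable g μ) :
    Tendsto (fun i => ∫ x, Real.exp (c i * Q x) * g x ∂μ) l (nhds (∫ x, g x ∂μ)) := by
  refine tendsto_integral_filter_of_dominated_convergence (fun x => ‖g x‖)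
    (Eventually.of_forall fun i => ?_) ?_ hg.norm (Eventually.of_forall fun x => ?_)
  · exact ((hQm.const_mul (c i)).exp.aestronglyMeasurable).mul hg.1
  · filter_upwards [hc0] with i hi
    refine Eventually.of_forall fun x => ?_
    have hexp : Real.exp (c i * Q x) ≤ 1 :=
      Real.exp_le_one_iff.2 (mul_nonpos_of_nonneg_of_nonpos hi (hQ x))
    rw [norm_mul, Real.norm_of_nonneg (Real.exp_pos _).le]
    exact mul_le_of_le_one_left (norm_nonneg _) hexp
  · simpa using ((hc.mul_const (Q x)).rexp).mul_const (g x)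

theorem Matrix.det_ne_zero_of_neg_posDef {n : Type*} [Fintype n] [DecidableEq n]
    {A : Matrix n n ℝ} (hA : (-A).PosDef) : A.det ≠ 0 :=
  ((isUnit_iff_isUnit_det _).1 (neg_neg A ▸ hA.isUnit.neg)).ne_zero

theorem Matrix.dotProduct_inv_mulVec_nonpos {n : Type*} [Fintype n] [DecidableEq n]
    {A : Matrix n n ℝ} (hA : (-A).PosDef) (w : n → ℝ) : w ⬝ᵥ A⁻¹ *ᵥ w ≤ 0 := by
  have hinv : A⁻¹ = -(-A)⁻¹ := inv_eq_left_inv <| by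
    rw [neg_mul, ← mul_neg, nonsing_inv_mul _ ((isUnit_iff_isUnit_det _).1 hA.isUnit)]
  have h := hA.inv.posSemidef.dotProduct_mulVec_nonneg w
  rw [star_trivial] at h
  rw [hinv, neg_mulVec, dotProduct_neg]
  exact neg_nonpos.2 h

section MidpointDifference

variable {E : Type*} [NormedAddCommGroup E] [NormedSpace ℝ E] [FiniteDimensional ℝ E]
  [MeasurableSpace E] [BorelSpace E] (μ : Measure E) [μ.IsAddHaarMeasure]

theorem map_smul_sub_left_addHaar {θ : ℝ} (hθ : 0 < θ) (x : E) :
    Measure.map (fun y => θ⁻¹ • (x - y)) μ = ENNReal.ofReal (θ ^ finrank ℝ E) • μ := by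
  have hcomp : (fun y => θ⁻¹ • (x - y)) = (θ⁻¹ • ·) ∘ (x - ·) := rfl
  rw [hcomp, ← Measure.map_map (by fun_prop) (by fun_prop), Measure.map_sub_left_eq_self,
    Measure.map_addHaar_smul μ (inv_ne_zero hθ.ne'), inv_pow, inv_inv, abs_of_pos (by positivity)]

theorem measurePreserving_add_comp_snd_prod {F : Type*} [MeasurableSpace F] (ν : Measure F)
    [SFinite ν] {L : F → E} (hL : Measurable L) :
    MeasurePreserving (fun p : E × F => (p.1 + L p.2, p.2)) (μ.prod ν) (μ.prod ν) := by
  have hshear : MeasurePreserving (fun p : F × E => (p.1, L p.1 + p.2)) (ν.prod μ) (ν.prod μ) :=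
    (MeasurePreserving.id ν).skew_product (by fun_prop)
      (Eventually.of_forall fun s => map_add_left_eq_self μ (L s))
  convert! (Measure.measurePreserving_swap.comp hshear).comp
    (Measure.measurePreserving_swap (μ := μ) (ν := ν)) using 1
  ext p <;> simp [add_comm]

theorem measurePreserving_midpoint_smul_sub {θ : ℝ} (hθ : 0 < θ) :
    MeasurePreserving (fun p : E × E => ((2 : ℝ)⁻¹ • (p.1 + p.2), θ⁻¹ • (p.1 - p.2)))
      (μ.prod μ) (ENNReal.ofReal (θ ^ finrank ℝ E) • μ.prod μ) := by
  rw [← Measure.prod_smul_right]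
  have hscale : MeasurePreserving (fun p : E × E => (p.1, θ⁻¹ • (p.1 - p.2)))
      (μ.prod μ) (μ.prod (ENNReal.ofReal (θ ^ finrank ℝ E) • μ)) :=
    (MeasurePreserving.id μ).skew_product (g := fun x y => θ⁻¹ • (x - y)) (by fun_prop)
      (Eventually.of_forall (map_smul_sub_left_addHaar μ hθ))
  convert! (measurePreserving_add_comp_snd_prod μ _ (L := fun s : E => (-(θ / 2)) • s)
    (by fun_prop)).comp hscale using 1
  ext1 p
  simp only [Function.comp_apply, Prod.mk.injEq, and_true]
  match_scalars
  · field_simp; ring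
  · field_simp

theorem integrable_comp_midpoint_smul_sub {G : Type*} [NormedAddCommGroup G] {θ : ℝ} (hθ : 0 < θ)
    {f : E × E → G} (hf : Integrable f (μ.prod μ)) :
    Integrable (fun p => f ((2 : ℝ)⁻¹ • (p.1 + p.2), θ⁻¹ • (p.1 - p.2))) (μ.prod μ) :=
  ((measurePreserving_midpoint_smul_sub μ hθ).integrable_comp (hf.1.smul_measure _)).2
    (hf.smul_measure ENNReal.ofReal_ne_top)

theorem integral_comp_midpoint_smul_sub {G : Type*} [NormedAddCommGroup G] [NormedSpace ℝ G]
    {θ : ℝ} (hθ : 0 < θ) {f : E × E → G} (hf : AEStronglyMeasurable f (μ.prod μ)) :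
    ∫ p, f ((2 : ℝ)⁻¹ • (p.1 + p.2), θ⁻¹ • (p.1 - p.2)) ∂μ.prod μ
      = θ ^ finrank ℝ E • ∫ p, f p ∂μ.prod μ := by
  have hT := measurePreserving_midpoint_smul_sub μ hθ
  rw [← integral_map hT.aemeasurable (by rw [hT.map_eq]; exact hf.smul_measure _), hT.map_eq,
    integral_smul_measure, ENNReal.toReal_ofReal (by positivity)]

end MidpointDifference

theorem sq_rpow_div_two {a : ℝ} (ha : 0 ≤ a) (x : ℝ) : (a ^ (x / 2)) ^ 2 = a ^ x := by
  rw [← Real.rpow_natCast, ← Real.rpow_mul ha]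
  norm_num

theorem crossCorr_div_avgIntensity_sq {d : ℕ} {Ξ : Matrix (Fin d) (Fin d) ℝ} (hdet : Ξ.det ≠ 0)
    (J : (Fin d → ℝ) → (Fin d → ℝ) → ℝ) {z : ℝ} (hz : 0 < z) (r : Fin d → ℝ) :
    crossCorr Ξ J z r / avgIntensity Ξ J z r ^ 2 =
      (∫ q : (Fin d → ℝ) × (Fin d → ℝ),
        Real.exp ((6 / z ^ 3) * (((r - q.1) ⬝ᵥ Ξ⁻¹.mulVec (r - q.1))
          + ((r - q.2) ⬝ᵥ Ξ⁻¹.mulVec (r - q.2)))) * (J q.1 q.2) ^ 2)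
      / (∫ x : Fin d → ℝ,
        Real.exp ((6 / z ^ 3) * ((r - x) ⬝ᵥ Ξ⁻¹.mulVec (r - x))) * J x x) ^ 2 := by
  have hprefactor : (12 / z ^ 3) ^ (d : ℝ) * (2 * Real.pi) ^ (-(d : ℝ)) * |Ξ.det|⁻¹ ≠ 0 := by
    have := abs_pos.2 hdet
    positivity
  rw [crossCorr, avgIntensity, mul_pow, mul_pow, mul_pow, sq_rpow_div_two (by positivity),
    sq_rpow_div_two (by positivity), sq_rpow_div_two (abs_nonneg _), Real.rpow_neg_one,
    mul_div_mul_left _ _ hprefactor]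

theorem crossCorr_ratio_tendsto_general (d : ℕ)
    (Ξ : Matrix (Fin d) (Fin d) ℝ) (hneg : (-Ξ).PosDef)
    (θ : ℝ) (hθ : 0 < θ)
    (Γ : SchwartzMap ((Fin d → ℝ) × (Fin d → ℝ)) ℝ)
    (hΓint : 0 < ∫ r : Fin d → ℝ, Γ (r, 0))
    (J : (Fin d → ℝ) → (Fin d → ℝ) → ℝ)
    (hJ : ∀ x y, J x y = Γ ((2 : ℝ)⁻¹ • (x + y), θ⁻¹ • (x - y)))
    (r : Fin d → ℝ) :
    Tendsto (fun z : ℝ => crossCorr Ξ J z r / (avgIntensity Ξ J z r) ^ 2)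
      atTop
      (nhds (θ ^ d * (∫ q : (Fin d → ℝ) × (Fin d → ℝ), (Γ q) ^ 2)
        / (∫ r' : Fin d → ℝ, Γ (r', 0)) ^ 2)) := by
  have hdiag : ∀ x, J x x = Γ (x, 0) := fun x => by
    rw [hJ, sub_self, smul_zero, ← two_smul ℝ x, smul_smul, inv_mul_cancel₀ two_ne_zero, one_smul]
  have hQ : ∀ x, (r - x) ⬝ᵥ Ξ⁻¹ *ᵥ (r - x) ≤ 0 := fun x => dotProduct_inv_mulVec_nonpos hneg _
  have hc : Tendsto (fun z : ℝ => 6 / z ^ 3) atTop (nhds 0) :=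
    tendsto_const_nhds.div_atTop (tendsto_pow_atTop three_ne_zero)
  have hc0 : ∀ᶠ z : ℝ in atTop, 0 ≤ 6 / z ^ 3 :=
    (eventually_ge_atTop 0).mono fun z hz => by positivity
  -- instance search does not find this one for the product of two `volume`s
  have := Measure.prod.instIsAddHaarMeasure (volume : Measure (Fin d → ℝ))
    (volume : Measure (Fin d → ℝ))
  have hΓsq : Integrable (fun q => Γ q ^ 2) (volume.prod volume) := (Γ.memLp 2 _).integrable_sq
  have hnum := tendsto_integral_exp_mul_mul_of_nonpos hc hc0 (by fun_prop)
    (fun q => add_nonpos (hQ q.1) (hQ q.2)) (integrable_comp_midpoint_smul_sub volume hθ hΓsq)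
  have hden := tendsto_integral_exp_mul_mul_of_nonpos hc hc0 (by fun_prop) hQ
    (Integrable.of_integral_ne_zero hΓint.ne')
  rw [integral_comp_midpoint_smul_sub volume hθ hΓsq.1, finrank_fin_fun, smul_eq_mul] at hnum
  refine (hnum.div (hden.pow 2) (pow_ne_zero 2 hΓint.ne')).congr' ?_
  filter_upwards [eventually_gt_atTop 0] with z hz
  rw [crossCorr_div_avgIntensity_sq (det_ne_zero_of_neg_posDef hneg) J hz]
  simp only [hdiag]
  simp only [hJ, Pi.div_apply]
  rfl

/-- Long-distance limit of the ratio `χ(z,r)/E[I](z,r)²` for a partially coherent source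
with two-point correlation profile `Γ` and relative coherence length `θ`:
it converges to `θ^d ∫Γ² / (∫Γ(·,0))²` as `z → ∞`. -/
theorem crossCorr_ratio_tendsto (d : ℕ) (hd : 1 ≤ d)
    (Ξ : Matrix (Fin d) (Fin d) ℝ) (hsymm : Ξ.IsSymm) (hneg : (-Ξ).PosDef)
    (θ : ℝ) (hθ : 0 < θ)
    (Γ : SchwartzMap ((Fin d → ℝ) × (Fin d → ℝ)) ℝ)
    (hΓ0 : ∀ r : Fin d → ℝ, 0 ≤ Γ (r, 0))
    (hΓint : 0 < ∫ r : Fin d → ℝ, Γ (r, 0))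
    (J : (Fin d → ℝ) → (Fin d → ℝ) → ℝ)
    (hJ : ∀ x y, J x y = Γ ((2 : ℝ)⁻¹ • (x + y), θ⁻¹ • (x - y)))
    (r : Fin d → ℝ) :
    Tendsto (fun z : ℝ => crossCorr Ξ J z r / (avgIntensity Ξ J z r) ^ 2)
      atTop
      (nhds (θ ^ d * (∫ q : (Fin d → ℝ) × (Fin d → ℝ), (Γ q) ^ 2)
        / (∫ r' : Fin d → ℝ, Γ (r', 0)) ^ 2)) :=
  crossCorr_ratio_tendsto_general d Ξ hneg θ hθ Γ hΓint J hJ r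
end

section
/- Let d = 2, Ξ = −σ_m² I₂ with σ_m > 0, let r₀, r_w, θ, z > 0, and define r_s > 0 by 1/r_s² = 1/r₀² + 1/(θ²r_w²). Set J(x,y) = exp(−(|x|² + |y|²)/r₀²) · exp(−|x−y|²/(2θ²r_w²)), and define E(z,r) = (12/z³)^{d/2}(2π)^{−d/2}|det Ξ|^{−1/2} ∫ exp((6/z³)(r−x)ᵀΞ⁻¹(r−x)) J(x,x) dx and χ(z,r) = (12/z³)^{d}(2π)^{−d}|det Ξ|^{−1} ∫∫ exp((6/z³)[(r−x)ᵀΞ⁻¹(r−x)+(r−y)ᵀΞ⁻¹(r−y)]) J(x,y)² dx dy for d = 2. Then: (i) χ(z,0)/E(z,0)² = (1 + σ_m²z³/(3r₀²)) / (1 + σ_m²z³/(3r_s²)); (ii) this ratio tends to (r_s/r₀)² = θ²r_w²/(r₀² + θ²r_w²) as z → ∞; and (iii) for fixed z it tends to 1/(1 + σ_m²z³/(3θ²r_w²)) as r₀ → ∞. -/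
open Matrix MeasureTheory Filter

/-- Gaussian correlated beam covariance `J_θ(x,y) = f(x)f(y)g_θ(x−y)` in dimension 2. -/
noncomputable def gaussJ (r₀ θ rw : ℝ) (x y : Fin 2 → ℝ) : ℝ :=
  Real.exp (-((x ⬝ᵥ x) + (y ⬝ᵥ y)) / r₀ ^ 2) *
    Real.exp (-((x - y) ⬝ᵥ (x - y)) / (2 * θ ^ 2 * rw ^ 2))

/-! ### Auxiliary Gaussian integral lemmas -/

lemma dot_self_eq (x : Fin 2 → ℝ) : x ⬝ᵥ x = ∑ i, x i ^ 2 := by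
  simp [dotProduct, sq]

lemma dot_self_nonneg' (x : Fin 2 → ℝ) : 0 ≤ x ⬝ᵥ x := by
  rw [dot_self_eq]; positivity

lemma gauss2_fun_eq {a : ℝ} (x : Fin 2 → ℝ) :
    Real.exp (-a * (x ⬝ᵥ x)) = ∏ i, Real.exp (-a * (x i) ^ 2) := by
  rw [dot_self_eq, Finset.mul_sum, Real.exp_sum]

lemma gauss2_integrable {a : ℝ} (ha : 0 < a) :
    Integrable fun x : Fin 2 → ℝ => Real.exp (-a * (x ⬝ᵥ x)) := by
  have h := Integrable.fintype_prod (ι := Fin 2)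
    (f := fun _ (v : ℝ) => Real.exp (-a * v ^ 2)) (fun _ => integrable_exp_neg_mul_sq ha)
  exact h.congr (Filter.Eventually.of_forall fun x => (gauss2_fun_eq x).symm)

lemma gauss2 {a : ℝ} (ha : 0 < a) :
    ∫ x : Fin 2 → ℝ, Real.exp (-a * (x ⬝ᵥ x)) = Real.pi / a := by
  simp_rw [gauss2_fun_eq]
  rw [volume_pi, integral_fintype_prod_eq_pow (ι := Fin 2) (fun v : ℝ => Real.exp (-a * v ^ 2)),
    integral_gaussian, Fintype.card_fin, Real.sq_sqrt (by positivity)]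

lemma gauss2_shift {a : ℝ} (ha : 0 < a) (m : Fin 2 → ℝ) :
    ∫ y : Fin 2 → ℝ, Real.exp (-a * ((y - m) ⬝ᵥ (y - m))) = Real.pi / a := by
  rw [integral_sub_right_eq_self (fun y : Fin 2 → ℝ => Real.exp (-a * (y ⬝ᵥ y))) m]
  exact gauss2 ha

lemma complete_sq {b c : ℝ} (hb : 0 < b) (hc : 0 ≤ c) (x y : Fin 2 → ℝ) :
    -b * (y ⬝ᵥ y) - c * ((x - y) ⬝ᵥ (x - y))
      = -(b + c) * ((y - (c / (b + c)) • x) ⬝ᵥ (y - (c / (b + c)) • x))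
        - (b * c / (b + c)) * (x ⬝ᵥ x) := by
  have hbc : b + c ≠ 0 := by positivity
  simp only [dotProduct, Fin.sum_univ_two, Pi.sub_apply, Pi.smul_apply, smul_eq_mul]
  field_simp
  ring

lemma inner_int {b c : ℝ} (hb : 0 < b) (hc : 0 ≤ c) (x : Fin 2 → ℝ) :
    ∫ y : Fin 2 → ℝ, Real.exp (-b * (y ⬝ᵥ y) - c * ((x - y) ⬝ᵥ (x - y)))
      = Real.pi / (b + c) * Real.exp (-(b * c / (b + c)) * (x ⬝ᵥ x)) := by
  have hbc : 0 < b + c := by positivity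
  have : ∀ y : Fin 2 → ℝ,
      Real.exp (-b * (y ⬝ᵥ y) - c * ((x - y) ⬝ᵥ (x - y)))
        = Real.exp (-(b + c) * ((y - (c / (b + c)) • x) ⬝ᵥ (y - (c / (b + c)) • x)))
          * Real.exp (-(b * c / (b + c)) * (x ⬝ᵥ x)) := by
    intro y
    rw [← Real.exp_add, complete_sq hb hc x y]
    ring_nf
  simp_rw [this]
  rw [integral_mul_const _, gauss2_shift hbc]

lemma double_int {b c : ℝ} (hb : 0 < b) (hc : 0 ≤ c) :
    ∫ q : (Fin 2 → ℝ) × (Fin 2 → ℝ),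
      Real.exp (-b * (q.1 ⬝ᵥ q.1) - b * (q.2 ⬝ᵥ q.2) - c * ((q.1 - q.2) ⬝ᵥ (q.1 - q.2)))
      = Real.pi ^ 2 / (b * (b + 2 * c)) := by
  have hbc : 0 < b + c := by positivity
  have hk : 0 < b + b * c / (b + c) := by positivity
  have hint : Integrable (fun q : (Fin 2 → ℝ) × (Fin 2 → ℝ) =>
      Real.exp (-b * (q.1 ⬝ᵥ q.1) - b * (q.2 ⬝ᵥ q.2) - c * ((q.1 - q.2) ⬝ᵥ (q.1 - q.2)))) := by
    have hg : Integrable (fun q : (Fin 2 → ℝ) × (Fin 2 → ℝ) =>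
        Real.exp (-b * (q.1 ⬝ᵥ q.1)) * Real.exp (-b * (q.2 ⬝ᵥ q.2))) := by
      rw [Measure.volume_eq_prod]
      exact (gauss2_integrable hb).mul_prod (gauss2_integrable hb)
    refine hg.mono' ?_ ?_
    · apply Continuous.aestronglyMeasurable
      apply Real.continuous_exp.comp
      unfold dotProduct
      fun_prop
    · filter_upwards with q
      rw [Real.norm_of_nonneg (Real.exp_pos _).le, ← Real.exp_add]
      apply Real.exp_le_exp.2
      have := dot_self_nonneg' (q.1 - q.2)
      nlinarith
  rw [Measure.volume_eq_prod, integral_prod _ (by rw [← Measure.volume_eq_prod]; exact hint)]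
  have step : ∀ x : Fin 2 → ℝ,
      (∫ y : Fin 2 → ℝ,
        Real.exp (-b * (x ⬝ᵥ x) - b * (y ⬝ᵥ y) - c * ((x - y) ⬝ᵥ (x - y))))
      = Real.pi / (b + c) * Real.exp (-(b + b * c / (b + c)) * (x ⬝ᵥ x)) := by
    intro x
    have : ∀ y : Fin 2 → ℝ,
        Real.exp (-b * (x ⬝ᵥ x) - b * (y ⬝ᵥ y) - c * ((x - y) ⬝ᵥ (x - y)))
          = Real.exp (-b * (x ⬝ᵥ x))
            * Real.exp (-b * (y ⬝ᵥ y) - c * ((x - y) ⬝ᵥ (x - y))) := by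
      intro y; rw [← Real.exp_add]; ring_nf
    simp_rw [this]
    rw [integral_const_mul _, inner_int hb hc x, ← mul_assoc,
      mul_comm (Real.exp _) (Real.pi / (b + c)), mul_assoc, ← Real.exp_add]
    ring_nf
  simp_rw [step]
  rw [integral_const_mul _, gauss2 hk]
  have h1 : b + c ≠ 0 := hbc.ne'
  have h2 : b + b * c / (b + c) ≠ 0 := hk.ne'
  field_simp
  ring

lemma Xi_inv (σm : ℝ) (hσ : 0 < σm) :
    (-σm ^ 2 • (1 : Matrix (Fin 2) (Fin 2) ℝ))⁻¹ = (-σm ^ 2)⁻¹ • 1 := by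
  apply Matrix.inv_eq_right_inv
  rw [Matrix.smul_mul, Matrix.mul_smul, Matrix.one_mul, smul_smul,
    mul_inv_cancel₀ (neg_ne_zero.mpr (by positivity : (σm:ℝ)^2 ≠ 0)), one_smul]

lemma ratio_closed (σm r₀ rw θ z : ℝ)
    (hσ : 0 < σm) (hr₀ : 0 < r₀) (hrw : 0 < rw) (hθ : 0 < θ) (hz : 0 < z) :
    crossCorr (-σm ^ 2 • (1 : Matrix (Fin 2) (Fin 2) ℝ)) (gaussJ r₀ θ rw) z 0
        / (avgIntensity (-σm ^ 2 • (1 : Matrix (Fin 2) (Fin 2) ℝ)) (gaussJ r₀ θ rw) z 0) ^ 2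
      = (6 / (σm ^ 2 * z ^ 3) + 2 / r₀ ^ 2)
        / (6 / (σm ^ 2 * z ^ 3) + 2 / r₀ ^ 2 + 2 / (θ ^ 2 * rw ^ 2)) := by
  have hσ2 : (0:ℝ) < σm ^ 2 := by positivity
  have hz3 : (0:ℝ) < z ^ 3 := by positivity
  set b : ℝ := 6 / (σm ^ 2 * z ^ 3) + 2 / r₀ ^ 2 with hbdef
  set c : ℝ := 1 / (θ ^ 2 * rw ^ 2) with hcdef
  have hb : 0 < b := by positivity
  have hc : (0:ℝ) < c := by positivity
  have hinv := Xi_inv σm hσ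
  have hquad : ∀ v : Fin 2 → ℝ,
      v ⬝ᵥ (-σm ^ 2 • (1 : Matrix (Fin 2) (Fin 2) ℝ))⁻¹.mulVec v
        = -(σm ^ 2)⁻¹ * (v ⬝ᵥ v) := by
    intro v
    rw [hinv, Matrix.smul_mulVec, Matrix.one_mulVec, dotProduct_smul, smul_eq_mul, inv_neg]
  have hdet : |(-σm ^ 2 • (1 : Matrix (Fin 2) (Fin 2) ℝ)).det| = σm ^ 4 := by
    rw [Matrix.det_smul, Matrix.det_one, Fintype.card_fin]
    rw [abs_of_nonneg (by positivity : (0:ℝ) ≤ (-σm^2)^2 * 1)]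
    ring
  have p1 : (12 / z ^ 3 : ℝ) ^ (((2:ℕ):ℝ) / 2) = 12 / z ^ 3 := by
    rw [show ((2:ℕ):ℝ)/2 = 1 by norm_num, Real.rpow_one]
  have p2 : (2 * Real.pi : ℝ) ^ (-((2:ℕ):ℝ) / 2) = (2 * Real.pi)⁻¹ := by
    rw [show -((2:ℕ):ℝ)/2 = -1 by norm_num, Real.rpow_neg_one]
  have p3 : (σm ^ 4 : ℝ) ^ (-(1:ℝ) / 2) = (σm ^ 2)⁻¹ := by
    rw [show (σm^4:ℝ) = (σm^2)^((2:ℕ):ℝ) by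
        rw [Real.rpow_natCast]; ring,
      ← Real.rpow_mul (by positivity)]
    norm_num [Real.rpow_neg_one]
  have p4 : (12 / z ^ 3 : ℝ) ^ (((2:ℕ)):ℝ) = (12 / z ^ 3) ^ (2:ℕ) := by
    rw [Real.rpow_natCast]
  have p5 : (2 * Real.pi : ℝ) ^ (-((2:ℕ):ℝ)) = ((2 * Real.pi) ^ (2:ℕ))⁻¹ := by
    rw [Real.rpow_neg (by positivity), Real.rpow_natCast]
  have hE : avgIntensity (-σm ^ 2 • (1 : Matrix (Fin 2) (Fin 2) ℝ)) (gaussJ r₀ θ rw) z 0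
      = (12 / z ^ 3) * (2 * Real.pi)⁻¹ * (σm ^ 2)⁻¹ * (Real.pi / b) := by
    rw [avgIntensity]
    have hIeq : ∀ x : Fin 2 → ℝ,
        Real.exp ((6 / z ^ 3) * (((0:Fin 2 → ℝ) - x) ⬝ᵥ
            (-σm ^ 2 • (1 : Matrix (Fin 2) (Fin 2) ℝ))⁻¹.mulVec ((0:Fin 2 → ℝ) - x)))
          * gaussJ r₀ θ rw x x = Real.exp (-b * (x ⬝ᵥ x)) := by
      intro x
      rw [hquad, gaussJ, sub_self, zero_dotProduct, neg_zero, zero_div, Real.exp_zero,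
        mul_one, ← Real.exp_add]
      congr 1
      rw [zero_sub, neg_dotProduct, dotProduct_neg, neg_neg, hbdef]
      generalize (x ⬝ᵥ x : ℝ) = X
      field_simp
      ring
    simp_rw [hIeq]
    rw [gauss2 hb, hdet, p1, p2, p3]
  have hX : crossCorr (-σm ^ 2 • (1 : Matrix (Fin 2) (Fin 2) ℝ)) (gaussJ r₀ θ rw) z 0
      = (12 / z ^ 3) ^ (2:ℕ) * ((2 * Real.pi) ^ (2:ℕ))⁻¹ * (σm ^ 4)⁻¹
          * (Real.pi ^ 2 / (b * (b + 2 * c))) := by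
    rw [crossCorr]
    have hIeq : ∀ q : (Fin 2 → ℝ) × (Fin 2 → ℝ),
        Real.exp ((6 / z ^ 3) * ((((0:Fin 2 → ℝ) - q.1) ⬝ᵥ
              (-σm ^ 2 • (1 : Matrix (Fin 2) (Fin 2) ℝ))⁻¹.mulVec ((0:Fin 2 → ℝ) - q.1))
            + (((0:Fin 2 → ℝ) - q.2) ⬝ᵥ
              (-σm ^ 2 • (1 : Matrix (Fin 2) (Fin 2) ℝ))⁻¹.mulVec ((0:Fin 2 → ℝ) - q.2))))
          * (gaussJ r₀ θ rw q.1 q.2) ^ 2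
        = Real.exp (-b * (q.1 ⬝ᵥ q.1) - b * (q.2 ⬝ᵥ q.2)
            - c * ((q.1 - q.2) ⬝ᵥ (q.1 - q.2))) := by
      rintro ⟨x, y⟩
      rw [hquad, hquad, gaussJ]
      rw [zero_sub, neg_dotProduct, dotProduct_neg, neg_neg,
        zero_sub, neg_dotProduct, dotProduct_neg, neg_neg]
      rw [mul_pow, ← Real.exp_nat_mul, ← Real.exp_nat_mul, ← Real.exp_add, ← Real.exp_add]
      congr 1
      rw [hbdef, hcdef]
      generalize (x ⬝ᵥ x : ℝ) = X
      generalize (y ⬝ᵥ y : ℝ) = Y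
      generalize ((x - y) ⬝ᵥ (x - y) : ℝ) = D
      push_cast
      field_simp
      ring
    simp_rw [hIeq]
    rw [double_int hb hc.le, hdet, p4, p5]
  rw [hE, hX]
  have hπ : (0:ℝ) < Real.pi := Real.pi_pos
  have hb2c : (0:ℝ) < b + 2 * c := by positivity
  rw [show 6 / (σm ^ 2 * z ^ 3) + 2 / r₀ ^ 2 + 2 / (θ ^ 2 * rw ^ 2) = b + 2 * c by
    rw [hbdef, hcdef]; ring]
  field_simp

/-- Gaussian correlated beam in lateral dimension `d = 2` with isotropic medium Hessian
`Ξ = −σ_m² I₂`: (i) explicit ratio `χ/E[I]²` at the beam center, (ii) its limit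
`(r_s/r₀)² = θ²r_w²/(r₀²+θ²r_w²)` as `z → ∞`, and (iii) its limit
`1/(1+σ_m²z³/(3θ²r_w²))` as `r₀ → ∞` for fixed `z`. -/
theorem gaussian_beam_d2 (σm r₀ rw θ z rs : ℝ)
    (hσ : 0 < σm) (hr₀ : 0 < r₀) (hrw : 0 < rw) (hθ : 0 < θ) (hz : 0 < z)
    (hrs : 0 < rs) (hrsdef : 1 / rs ^ 2 = 1 / r₀ ^ 2 + 1 / (θ ^ 2 * rw ^ 2)) :
    (crossCorr (-σm ^ 2 • (1 : Matrix (Fin 2) (Fin 2) ℝ)) (gaussJ r₀ θ rw) z 0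
        / (avgIntensity (-σm ^ 2 • (1 : Matrix (Fin 2) (Fin 2) ℝ)) (gaussJ r₀ θ rw) z 0) ^ 2
      = (1 + σm ^ 2 * z ^ 3 / (3 * r₀ ^ 2)) / (1 + σm ^ 2 * z ^ 3 / (3 * rs ^ 2)))
    ∧ ((rs / r₀) ^ 2 = θ ^ 2 * rw ^ 2 / (r₀ ^ 2 + θ ^ 2 * rw ^ 2)
      ∧ Tendsto (fun z' : ℝ =>
          crossCorr (-σm ^ 2 • (1 : Matrix (Fin 2) (Fin 2) ℝ)) (gaussJ r₀ θ rw) z' 0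
            / (avgIntensity (-σm ^ 2 • (1 : Matrix (Fin 2) (Fin 2) ℝ))
                (gaussJ r₀ θ rw) z' 0) ^ 2)
        atTop (nhds (θ ^ 2 * rw ^ 2 / (r₀ ^ 2 + θ ^ 2 * rw ^ 2))))
    ∧ Tendsto (fun r₀' : ℝ =>
          crossCorr (-σm ^ 2 • (1 : Matrix (Fin 2) (Fin 2) ℝ)) (gaussJ r₀' θ rw) z 0
            / (avgIntensity (-σm ^ 2 • (1 : Matrix (Fin 2) (Fin 2) ℝ))
                (gaussJ r₀' θ rw) z 0) ^ 2)
        atTop (nhds (1 / (1 + σm ^ 2 * z ^ 3 / (3 * θ ^ 2 * rw ^ 2)))) := by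
  have hσ2 : (0:ℝ) < σm ^ 2 := by positivity
  have hθrw : (0:ℝ) < θ ^ 2 * rw ^ 2 := by positivity
  have h1 : (1:ℝ)/(θ^2*rw^2) = 1/rs^2 - 1/r₀^2 := by linarith
  have h2 : (2:ℝ)/(θ^2*rw^2) = 2/rs^2 - 2/r₀^2 := by
    rw [← mul_one_div 2 (θ^2*rw^2), h1]; ring
  refine ⟨?_, ⟨?_, ?_⟩, ?_⟩
  · rw [ratio_closed σm r₀ rw θ z hσ hr₀ hrw hθ hz, h2]
    have hz3 : (0:ℝ) < z ^ 3 := by positivity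
    rw [show 6/(σm^2*z^3)+2/r₀^2+(2/rs^2-2/r₀^2) = 6/(σm^2*z^3)+2/rs^2 by ring,
      div_eq_div_iff (by positivity) (by positivity)]
    field_simp
    ring
  · rw [div_pow, div_eq_div_iff (by positivity) (by positivity)]
    have hkey : r₀^2*(θ^2*rw^2) = rs^2*(θ^2*rw^2) + rs^2*r₀^2 := by
      field_simp at hrsdef
      linarith
    linarith [hkey]
  · -- z → ∞
    have heq : (fun z' : ℝ =>
        (6 / (σm ^ 2 * z' ^ 3) + 2 / r₀ ^ 2)
          / (6 / (σm ^ 2 * z' ^ 3) + 2 / r₀ ^ 2 + 2 / (θ ^ 2 * rw ^ 2))) =ᶠ[atTop]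
        (fun z' : ℝ =>
          crossCorr (-σm ^ 2 • (1 : Matrix (Fin 2) (Fin 2) ℝ)) (gaussJ r₀ θ rw) z' 0
            / (avgIntensity (-σm ^ 2 • (1 : Matrix (Fin 2) (Fin 2) ℝ))
                (gaussJ r₀ θ rw) z' 0) ^ 2) := by
      filter_upwards [eventually_gt_atTop (0:ℝ)] with z' hz'
      exact (ratio_closed σm r₀ rw θ z' hσ hr₀ hrw hθ hz').symm
    have h0 : Tendsto (fun z' : ℝ => 6 / (σm ^ 2 * z' ^ 3)) atTop (nhds 0) := by
      apply Tendsto.div_atTop tendsto_const_nhds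
      exact (tendsto_pow_atTop (by norm_num : (3:ℕ) ≠ 0)).const_mul_atTop hσ2
    have hnum : Tendsto (fun z' : ℝ => 6 / (σm ^ 2 * z' ^ 3) + 2 / r₀ ^ 2) atTop
        (nhds (0 + 2 / r₀ ^ 2)) := h0.add tendsto_const_nhds
    have hden : Tendsto (fun z' : ℝ =>
        6 / (σm ^ 2 * z' ^ 3) + 2 / r₀ ^ 2 + 2 / (θ ^ 2 * rw ^ 2)) atTop
        (nhds (0 + 2 / r₀ ^ 2 + 2 / (θ ^ 2 * rw ^ 2))) := hnum.add tendsto_const_nhds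
    have hlim := hnum.div hden (by positivity)
    have hval : (0 + 2 / r₀ ^ 2) / (0 + 2 / r₀ ^ 2 + 2 / (θ ^ 2 * rw ^ 2))
        = θ ^ 2 * rw ^ 2 / (r₀ ^ 2 + θ ^ 2 * rw ^ 2) := by
      field_simp
      ring
    rw [hval] at hlim
    exact hlim.congr' heq
  · -- r₀ → ∞
    have heq : (fun r₀' : ℝ =>
        (6 / (σm ^ 2 * z ^ 3) + 2 / r₀' ^ 2)
          / (6 / (σm ^ 2 * z ^ 3) + 2 / r₀' ^ 2 + 2 / (θ ^ 2 * rw ^ 2))) =ᶠ[atTop]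
        (fun r₀' : ℝ =>
          crossCorr (-σm ^ 2 • (1 : Matrix (Fin 2) (Fin 2) ℝ)) (gaussJ r₀' θ rw) z 0
            / (avgIntensity (-σm ^ 2 • (1 : Matrix (Fin 2) (Fin 2) ℝ))
                (gaussJ r₀' θ rw) z 0) ^ 2) := by
      filter_upwards [eventually_gt_atTop (0:ℝ)] with r₀' hr₀'
      exact (ratio_closed σm r₀' rw θ z hσ hr₀' hrw hθ hz).symm
    have h0 : Tendsto (fun r₀' : ℝ => 2 / r₀' ^ 2) atTop (nhds 0) :=
      Tendsto.div_atTop tendsto_const_nhds (tendsto_pow_atTop (by norm_num : (2:ℕ) ≠ 0))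
    have hnum : Tendsto (fun r₀' : ℝ => 6 / (σm ^ 2 * z ^ 3) + 2 / r₀' ^ 2) atTop
        (nhds (6 / (σm ^ 2 * z ^ 3) + 0)) := tendsto_const_nhds.add h0
    have hden : Tendsto (fun r₀' : ℝ =>
        6 / (σm ^ 2 * z ^ 3) + 2 / r₀' ^ 2 + 2 / (θ ^ 2 * rw ^ 2)) atTop
        (nhds (6 / (σm ^ 2 * z ^ 3) + 0 + 2 / (θ ^ 2 * rw ^ 2))) :=
      hnum.add tendsto_const_nhds
    have hz3 : (0:ℝ) < z ^ 3 := by positivity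
    have hlim := hnum.div hden (by positivity)
    have hval : (6 / (σm ^ 2 * z ^ 3) + 0) / (6 / (σm ^ 2 * z ^ 3) + 0 + 2 / (θ ^ 2 * rw ^ 2))
        = 1 / (1 + σm ^ 2 * z ^ 3 / (3 * θ ^ 2 * rw ^ 2)) := by
      field_simp
      ring
    rw [hval] at hlim
    exact hlim.congr' heq
end

section
/- Let d ≥ 1, let R̂ ∈ L¹(ℝ^d, ℝ), and define R(x) = ∫_{ℝ^d} R̂(k) exp(i k·x) dk/(2π)^d (a bounded continuous function, assumed real-valued). Let g ∈ L¹(ℝ^d, ℂ), λ ∈ ℂ, and b ∈ ℝ^d. Define, for z ≥ 0 and ξ ∈ ℝ^d, ρ(z,ξ) = ∫_{ℝ^d} exp(−i w·ξ) g(w) exp(λ ∫_0^z R(w + s b) ds) dw. Then ρ(0,ξ) = ∫ exp(−iw·ξ)g(w)dw, and for every ξ the map z ↦ ρ(z,ξ) is differentiable with ∂_z ρ(z,ξ) = (λ/(2π)^d) ∫_{ℝ^d} R̂(k) exp(i z k·b) ρ(z, ξ − k) dk. -/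
/-!
Differentiate under the integral sign in `w`: the exponent `λ ∫₀^z R(w + s b) ds` has
`z`-derivative `λ R(w + z b)`, and `R` is bounded and continuous because `R̂` is integrable,
so `|g|` times a locally uniform bound dominates. Substituting
`R(w + z b) = (2π)^{-d} ∫ R̂(k) e^{i k·(w + z b)} dk` and swapping the `k`- and `w`-integrals
(Fubini, with majorant `|R̂(k)| |g(w)| sup |e^{λ ∫₀^z R}|`) turns the factor `e^{i k·w}` into
the shift `ξ ↦ ξ - k` of the Fourier variable.
-/

open MeasureTheory Matrix

/-- The exponential-of-line-integral ansatz
`ρ(z,ξ) = ∫ exp(−iw·ξ) g(w) exp(λ∫₀^z R(w+sb)ds) dw`. -/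
noncomputable def rhoSol {d : ℕ} (R : (Fin d → ℝ) → ℝ) (g : (Fin d → ℝ) → ℂ)
    (lam : ℂ) (b : Fin d → ℝ) (z : ℝ) (ξ : Fin d → ℝ) : ℂ :=
  ∫ w : Fin d → ℝ,
    Complex.exp (-Complex.I * ((w ⬝ᵥ ξ : ℝ) : ℂ)) * g w *
      Complex.exp (lam * ((∫ s in (0:ℝ)..z, R (w + s • b) : ℝ) : ℂ))

section Phase

variable {ι : Type*} [Fintype ι]

/-- Fourier transform with the kernel `exp(-i w·ξ)` of the paper (no factor `2π`, unlike
`Real.fourierIntegral`). -/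
noncomputable def fourierDot (h : (ι → ℝ) → ℂ) (ξ : ι → ℝ) : ℂ :=
  ∫ w, Complex.exp (-Complex.I * ((w ⬝ᵥ ξ : ℝ) : ℂ)) * h w

noncomputable def invFourierDot (f : (ι → ℝ) → ℂ) (x : ι → ℝ) : ℂ :=
  ∫ k, f k * Complex.exp (Complex.I * ((k ⬝ᵥ x : ℝ) : ℂ))

lemma norm_cexp_neg_I_mul_ofReal (r : ℝ) : ‖Complex.exp (-Complex.I * r)‖ = 1 := by
  rw [neg_mul, ← mul_neg, ← Complex.ofReal_neg, Complex.norm_exp_I_mul_ofReal]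

lemma integrable_cexp_neg_I_dotProduct_mul {h : (ι → ℝ) → ℂ} (hh : Integrable h) (ξ : ι → ℝ) :
    Integrable fun w => Complex.exp (-Complex.I * ((w ⬝ᵥ ξ : ℝ) : ℂ)) * h w :=
  hh.bdd_mul (c := 1) (by fun_prop : Continuous _).aestronglyMeasurable
    (ae_of_all _ fun w => (norm_cexp_neg_I_mul_ofReal _).le)

lemma continuous_invFourierDot {f : (ι → ℝ) → ℂ} (hf : Integrable f) :
    Continuous (invFourierDot f) :=
  continuous_of_dominated (bound := fun k => ‖f k‖)
    (fun x => hf.1.mul (by fun_prop : Continuous _).aestronglyMeasurable)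
    (fun x => ae_of_all _ fun k => by simp [Complex.norm_exp_I_mul_ofReal])
    hf.norm (ae_of_all _ fun k => by fun_prop)

lemma norm_invFourierDot_le (f : (ι → ℝ) → ℂ) (x : ι → ℝ) :
    ‖invFourierDot f x‖ ≤ ∫ k, ‖f k‖ :=
  (norm_integral_le_integral_norm _).trans_eq (by simp [Complex.norm_exp_I_mul_ofReal])

lemma cexp_phase_shift (k w y ξ : ι → ℝ) :
    Complex.exp (Complex.I * ((k ⬝ᵥ y : ℝ) : ℂ)) *
        Complex.exp (-Complex.I * ((w ⬝ᵥ (ξ - k) : ℝ) : ℂ)) =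
      Complex.exp (-Complex.I * ((w ⬝ᵥ ξ : ℝ) : ℂ)) *
        Complex.exp (Complex.I * ((k ⬝ᵥ (w + y) : ℝ) : ℂ)) := by
  rw [← Complex.exp_add, ← Complex.exp_add, dotProduct_sub, dotProduct_add, dotProduct_comm w k]
  push_cast
  ring_nf

theorem fourierDot_mul_invFourierDot_add {f h : (ι → ℝ) → ℂ} (hf : Integrable f)
    (hh : Integrable h) (y ξ : ι → ℝ) :
    fourierDot (fun w => h w * invFourierDot f (w + y)) ξ =
      ∫ k, f k * Complex.exp (Complex.I * ((k ⬝ᵥ y : ℝ) : ℂ)) * fourierDot h (ξ - k) := by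
  set Φ : (ι → ℝ) → (ι → ℝ) → ℂ := fun k w =>
    f k * Complex.exp (Complex.I * ((k ⬝ᵥ y : ℝ) : ℂ)) *
      (Complex.exp (-Complex.I * ((w ⬝ᵥ (ξ - k) : ℝ) : ℂ)) * h w)
  have hΦ_meas : AEStronglyMeasurable (Function.uncurry Φ) (volume.prod volume) :=
    (hf.1.comp_fst.mul (by fun_prop : Continuous _).aestronglyMeasurable).mul
      ((by fun_prop : Continuous _).aestronglyMeasurable.mul hh.1.comp_snd)
  have hΦ_int : Integrable (Function.uncurry Φ) (volume.prod volume) :=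
    (hf.norm.mul_prod hh.norm).mono' hΦ_meas <| ae_of_all _ fun ⟨k, w⟩ => by
      simp only [Function.uncurry_apply_pair, Φ, norm_mul, Complex.norm_exp_I_mul_ofReal,
        norm_cexp_neg_I_mul_ofReal, mul_one, one_mul, le_refl]
  calc fourierDot (fun w => h w * invFourierDot f (w + y)) ξ
      = ∫ w, ∫ k, Φ k w := by
        refine integral_congr_ae (ae_of_all _ fun w => ?_)
        simp only [invFourierDot, Φ, ← integral_const_mul]
        refine integral_congr_ae (ae_of_all _ fun k => ?_)
        linear_combination -(f k * h w) * cexp_phase_shift k w y ξ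
    _ = ∫ k, ∫ w, Φ k w := (integral_integral_swap hΦ_int).symm
    _ = _ := by simp only [Φ, fourierDot, integral_const_mul]

lemma continuous_of_ofReal_eq_mul_invFourierDot {R : (ι → ℝ) → ℝ} {f : (ι → ℝ) → ℂ} {c : ℂ}
    (hf : Integrable f) (hR : ∀ x, (R x : ℂ) = c * invFourierDot f x) : Continuous R := by
  have : R = fun x => (c * invFourierDot f x).re := funext fun x => by rw [← hR, Complex.ofReal_re]
  exact this ▸ Complex.continuous_re.comp (continuous_const.mul (continuous_invFourierDot hf))

lemma abs_le_of_ofReal_eq_mul_invFourierDot {R : (ι → ℝ) → ℝ} {f : (ι → ℝ) → ℂ} {c : ℂ}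
    (hR : ∀ x, (R x : ℂ) = c * invFourierDot f x) (x : ι → ℝ) :
    |R x| ≤ ‖c‖ * ∫ k, ‖f k‖ := by
  rw [← Real.norm_eq_abs, ← Complex.norm_real, hR, norm_mul]
  gcongr
  exact norm_invFourierDot_le f x

end Phase

section DerivUnderIntegral

lemma norm_cexp_mul_ofReal_le (lam : ℂ) (r : ℝ) :
    ‖Complex.exp (lam * r)‖ ≤ Real.exp (‖lam‖ * |r|) := by
  simpa [norm_mul] using Complex.norm_exp_le_exp_norm (lam * r)

lemma abs_le_mul_abs_of_hasDerivAt {f f' : ℝ → ℝ} {C : ℝ} (hf : ∀ t, HasDerivAt f (f' t) t)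
    (hf' : ∀ t, |f' t| ≤ C) (h0 : f 0 = 0) (t : ℝ) : |f t| ≤ C * |t| := by
  simpa [h0] using Convex.norm_image_sub_le_of_norm_hasDerivWithin_le
    (fun s _ => (hf s).hasDerivWithinAt) (fun s _ => hf' s) convex_univ
    (Set.mem_univ 0) (Set.mem_univ t)

variable {α : Type*} [MeasurableSpace α] {μ : Measure α}

lemma integrable_mul_cexp_mul_ofReal {a : α → ℂ} {φ : α → ℝ} {K : ℝ} (lam : ℂ)
    (ha : Integrable a μ) (hφ : AEStronglyMeasurable φ μ) (hφ_le : ∀ w, |φ w| ≤ K) :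
    Integrable (fun w => a w * Complex.exp (lam * φ w)) μ :=
  ha.mul_bdd (c := Real.exp (‖lam‖ * K))
    ((by fun_prop : Continuous fun r : ℝ => Complex.exp (lam * r)).comp_aestronglyMeasurable hφ)
    (ae_of_all _ fun w => (norm_cexp_mul_ofReal_le lam _).trans <|
      Real.exp_le_exp.2 (mul_le_mul_of_nonneg_left (hφ_le w) (norm_nonneg _)))

theorem hasDerivAt_integral_mul_cexp_mul_ofReal {a : α → ℂ} {Φ φ : α → ℝ → ℝ} {C : ℝ}
    (lam : ℂ) (ha : Integrable a μ) (hΦ_meas : ∀ t, AEStronglyMeasurable (fun w => Φ w t) μ)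
    (hφ_meas : ∀ t, AEStronglyMeasurable (fun w => φ w t) μ)
    (hΦ : ∀ w t, HasDerivAt (Φ w) (φ w t) t) (hφ_le : ∀ w t, |φ w t| ≤ C)
    (hΦ_zero : ∀ w, Φ w 0 = 0) (z : ℝ) :
    HasDerivAt (fun t => ∫ w, a w * Complex.exp (lam * Φ w t) ∂μ)
      (∫ w, a w * Complex.exp (lam * Φ w z) * (lam * φ w z) ∂μ) z := by
  have hΦ_le : ∀ w, ∀ t ∈ Metric.ball z 1, |Φ w t| ≤ C * (|z| + 1) := fun w t ht => by
    have hC : 0 ≤ C := (abs_nonneg _).trans (hφ_le w 0)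
    have ht' : |t| ≤ |z| + 1 := by
      have := abs_sub_abs_le_abs_sub t z
      rw [Metric.mem_ball, Real.dist_eq] at ht
      linarith
    exact (abs_le_mul_abs_of_hasDerivAt (hΦ w) (hφ_le w) (hΦ_zero w) t).trans
      (mul_le_mul_of_nonneg_left ht' hC)
  set M := Real.exp (‖lam‖ * (C * (|z| + 1)))
  have hM : ∀ w, ∀ t ∈ Metric.ball z 1, ‖Complex.exp (lam * Φ w t)‖ ≤ M := fun w t ht =>
    (norm_cexp_mul_ofReal_le lam _).trans <|
      Real.exp_le_exp.2 (mul_le_mul_of_nonneg_left (hΦ_le w t ht) (norm_nonneg _))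
  have hexp_meas : ∀ t, AEStronglyMeasurable (fun w => Complex.exp (lam * Φ w t)) μ := fun t =>
    (by fun_prop : Continuous fun r : ℝ => Complex.exp (lam * r)).comp_aestronglyMeasurable
      (hΦ_meas t)
  refine (hasDerivAt_integral_of_dominated_loc_of_deriv_le (Metric.ball_mem_nhds z one_pos)
    (F := fun t w => a w * Complex.exp (lam * Φ w t))
    (F' := fun t w => a w * Complex.exp (lam * Φ w t) * (lam * φ w t))
    (bound := fun w => ‖a w‖ * (M * (‖lam‖ * C)))
    (.of_forall fun t => ha.1.mul (hexp_meas t))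
    (integrable_mul_cexp_mul_ofReal lam ha (hΦ_meas z)
      (fun w => hΦ_le w z (Metric.mem_ball_self one_pos)))
    ((ha.1.mul (hexp_meas z)).mul (aestronglyMeasurable_const.mul
      (Complex.continuous_ofReal.comp_aestronglyMeasurable (hφ_meas z))))
    (ae_of_all _ fun w t ht => ?_) (ha.norm.mul_const _)
    (ae_of_all _ fun w t _ => ?_)).2
  · rw [norm_mul, norm_mul, mul_assoc, norm_mul, Complex.norm_real, Real.norm_eq_abs]
    gcongr
    exacts [hM w t ht, hφ_le w t]
  · simpa only [mul_assoc] using (((hΦ w t).ofReal_comp.const_mul lam).cexp).const_mul (a w)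

end DerivUnderIntegral

section LineIntegral

variable {E F : Type*} [NormedAddCommGroup E] [NormedSpace ℝ E]
  [NormedAddCommGroup F] [NormedSpace ℝ F] {R : E → F}

lemma hasDerivAt_intervalIntegral_comp_add_smul [CompleteSpace F] (hR : Continuous R)
    (w b : E) (t : ℝ) :
    HasDerivAt (fun t => ∫ s in (0 : ℝ)..t, R (w + s • b)) (R (w + t • b)) t :=
  have hRw : Continuous fun s : ℝ => R (w + s • b) := by fun_prop
  intervalIntegral.integral_hasDerivAt_right (hRw.intervalIntegrable _ _)
    (hRw.stronglyMeasurableAtFilter _ _) hRw.continuousAt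

lemma continuous_intervalIntegral_comp_add_smul (hR : Continuous R) (b : E) (t : ℝ) :
    Continuous fun w => ∫ s in (0 : ℝ)..t, R (w + s • b) :=
  intervalIntegral.continuous_parametric_intervalIntegral_of_continuous'
    (f := fun w s => R (w + s • b)) (by fun_prop) 0 t

end LineIntegral

lemma rhoSol_eq_fourierDot {d : ℕ} (R : (Fin d → ℝ) → ℝ) (g : (Fin d → ℝ) → ℂ) (lam : ℂ)
    (b : Fin d → ℝ) (z : ℝ) (ξ : Fin d → ℝ) :
    rhoSol R g lam b z ξ = fourierDot
      (fun w => g w * Complex.exp (lam * ((∫ s in (0 : ℝ)..z, R (w + s • b) : ℝ) : ℂ))) ξ := by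
  simp only [rhoSol, fourierDot, mul_assoc]

theorem rhoSol_solves_general (d : ℕ)
    (Rhat : (Fin d → ℝ) → ℝ) (hRhat : Integrable Rhat)
    (R : (Fin d → ℝ) → ℝ)
    (hR : ∀ x : Fin d → ℝ, (R x : ℂ) = (1 / (2 * Real.pi) ^ d) *
      ∫ k : Fin d → ℝ, (Rhat k : ℂ) * Complex.exp (Complex.I * ((k ⬝ᵥ x : ℝ) : ℂ)))
    (g : (Fin d → ℝ) → ℂ) (hg : Integrable g) (lam : ℂ) (b : Fin d → ℝ) :
    (∀ ξ : Fin d → ℝ,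
      rhoSol R g lam b 0 ξ
        = ∫ w : Fin d → ℝ, Complex.exp (-Complex.I * ((w ⬝ᵥ ξ : ℝ) : ℂ)) * g w)
    ∧ ∀ ξ : Fin d → ℝ, ∀ z : ℝ, 0 ≤ z →
      HasDerivAt (fun z' : ℝ => rhoSol R g lam b z' ξ)
        ((lam / (2 * Real.pi) ^ d) *
          ∫ k : Fin d → ℝ, (Rhat k : ℂ) *
            Complex.exp (Complex.I * z * ((k ⬝ᵥ b : ℝ) : ℂ)) *
            rhoSol R g lam b z (ξ - k)) z := by
  refine ⟨fun ξ => by simp [rhoSol], fun ξ z _ => ?_⟩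
  have hRhat' : Integrable fun k => (Rhat k : ℂ) := hRhat.ofReal
  have hR_cont : Continuous R := continuous_of_ofReal_eq_mul_invFourierDot hRhat' hR
  have hR_le := abs_le_of_ofReal_eq_mul_invFourierDot hR
  have hΦ := hasDerivAt_intervalIntegral_comp_add_smul hR_cont
  have hΦ_cont := continuous_intervalIntegral_comp_add_smul hR_cont b
  refine (hasDerivAt_integral_mul_cexp_mul_ofReal lam (integrable_cexp_neg_I_dotProduct_mul hg ξ)
    (fun t => (hΦ_cont t).aestronglyMeasurable)
    (fun t => (hR_cont.comp (by fun_prop)).aestronglyMeasurable) (fun w => hΦ w b)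
    (fun w t => hR_le _) (fun w => intervalIntegral.integral_same) z).congr_deriv ?_
  set Φ := fun w => ∫ s in (0 : ℝ)..z, R (w + s • b)
  have hgE : Integrable fun w => g w * Complex.exp (lam * Φ w) :=
    integrable_mul_cexp_mul_ofReal lam hg (hΦ_cont z).aestronglyMeasurable fun w =>
      abs_le_mul_abs_of_hasDerivAt (hΦ w b) (fun t => hR_le _) intervalIntegral.integral_same z
  calc ∫ w, Complex.exp (-Complex.I * ((w ⬝ᵥ ξ : ℝ) : ℂ)) * g w * Complex.exp (lam * Φ w) *
        (lam * R (w + z • b))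
      = lam * (1 / (2 * Real.pi) ^ d) * fourierDot (fun w => g w * Complex.exp (lam * Φ w) *
          invFourierDot (fun k => (Rhat k : ℂ)) (w + z • b)) ξ := by
        rw [fourierDot, ← integral_const_mul]
        refine integral_congr_ae (ae_of_all _ fun w => ?_)
        dsimp only
        rw [hR, invFourierDot]
        ring
    _ = lam * (1 / (2 * Real.pi) ^ d) * ∫ k, (Rhat k : ℂ) *
          Complex.exp (Complex.I * ((k ⬝ᵥ (z • b) : ℝ) : ℂ)) *
          fourierDot (fun w => g w * Complex.exp (lam * Φ w)) (ξ - k) := by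
        rw [fourierDot_mul_invFourierDot_add hRhat' hgE]
    _ = _ := by
        simp only [rhoSol_eq_fourierDot, dotProduct_smul, smul_eq_mul, Complex.ofReal_mul,
          mul_one_div, ← mul_assoc, Φ]

/-- The ansatz `ρ` solves, in the Fourier domain, the pair-interaction evolution equation:
`ρ(0,ξ) = ĝ(ξ)` and `∂_z ρ(z,ξ) = (λ/(2π)^d) ∫ R̂(k) exp(izk·b) ρ(z,ξ−k) dk`. -/
theorem rhoSol_solves (d : ℕ) (hd : 1 ≤ d)
    (Rhat : (Fin d → ℝ) → ℝ) (hRhat : Integrable Rhat)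
    (R : (Fin d → ℝ) → ℝ)
    (hR : ∀ x : Fin d → ℝ, (R x : ℂ) = (1 / (2 * Real.pi) ^ d) *
      ∫ k : Fin d → ℝ, (Rhat k : ℂ) * Complex.exp (Complex.I * ((k ⬝ᵥ x : ℝ) : ℂ)))
    (g : (Fin d → ℝ) → ℂ) (hg : Integrable g) (lam : ℂ) (b : Fin d → ℝ) :
    (∀ ξ : Fin d → ℝ,
      rhoSol R g lam b 0 ξ
        = ∫ w : Fin d → ℝ, Complex.exp (-Complex.I * ((w ⬝ᵥ ξ : ℝ) : ℂ)) * g w)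
    ∧ ∀ ξ : Fin d → ℝ, ∀ z : ℝ, 0 ≤ z →
      HasDerivAt (fun z' : ℝ => rhoSol R g lam b z' ξ)
        ((lam / (2 * Real.pi) ^ d) *
          ∫ k : Fin d → ℝ, (Rhat k : ℂ) *
            Complex.exp (Complex.I * z * ((k ⬝ᵥ b : ℝ) : ℂ)) *
            rhoSol R g lam b z (ξ - k)) z :=
  rhoSol_solves_general d Rhat hRhat R hR g hg lam b
end

section
/- Let d ≥ 1, z > 0, k₀ > 0, θ ∈ (0,1], and β > 1. Let Q : ℝ^d → ℝ be continuous with Q(x) ≤ 0 for all x, and let Γ̂ ∈ L¹(ℝ^{2d}, ℂ). Then for all r, x, y ∈ ℝ^d, lim_{ε→0⁺} ∫_{ℝ^{2d}} Γ̂(ζ,ξ) exp(i r·ζ) exp(i ε^β ξ·(x−y)/θ) exp(i ε^β ζ·(x+y)/2) exp(−i z ε^{2β−1} ξ·ζ/(k₀θ)) exp( (k₀²z/4) ∫_0^1 Q(y − x + (ε^{β−1} s z/k₀) ζ) ds ) dξ dζ/(2π)^{2d} = Γ(r,0) · exp((k₀²z/4) Q(y − x)), where Γ(r,0) := ∫_{ℝ^{2d}}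 Γ̂(ζ,ξ) exp(i r·ζ) dξ dζ/(2π)^{2d}. -/
/-!
Write the integrand as `Γ̂(ζ, ξ) u_ε(ζ, ξ)`. The factor `u_ε` has modulus at most one: its three
oscillatory phases are unimodular, and the damping factor `exp((k₀²z/4) ∫₀¹ Q)` is bounded by one
because `Q ≤ 0`. Since `β > 1`, every power `ε ^ p` in `u_ε` has `p > 0`, so it is continuous on
all of `ℝ` and vanishes at `ε = 0`; with `Q` continuous, `u_ε(ζ, ξ)` is therefore continuous in
`ε` and equals `exp(i r·ζ) exp((k₀²z/4) Q(y − x))` at `ε = 0`. Dominated convergence with the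
integrable majorant `‖Γ̂‖` gives the limit.
-/

open MeasureTheory Filter Matrix Topology

theorem tendsto_integral_mul_of_norm_le_one {α ι A : Type*} [MeasurableSpace α] {μ : Measure α}
    {l : Filter ι} [l.IsCountablyGenerated] [NormedRing A] [NormedSpace ℝ A] [CompleteSpace A]
    {g : α → A} {u : ι → α → A} {v : α → A} (hg : Integrable g μ)
    (hu_meas : ∀ i, AEStronglyMeasurable (u i) μ) (hu_le : ∀ i a, ‖u i a‖ ≤ 1)
    (hu_lim : ∀ a, Tendsto (fun i => u i a) l (𝓝 (v a))) :
    Tendsto (fun i => ∫ a, g a * u i a ∂μ) l (𝓝 (∫ a, g a * v a ∂μ)) :=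
  tendsto_integral_filter_of_dominated_convergence (fun a => ‖g a‖)
    (Eventually.of_forall fun i => hg.aestronglyMeasurable.mul (hu_meas i))
    (Eventually.of_forall fun i => ae_of_all _ fun a =>
      (norm_mul_le _ _).trans (mul_le_of_le_one_right (norm_nonneg _) (hu_le i a)))
    hg.norm (ae_of_all _ fun a => (hu_lim a).const_mul (g a))

theorem Complex.norm_exp_neg_I_mul_ofReal (t : ℝ) : ‖exp (-I * t)‖ = 1 := by
  simpa [neg_mul, ← mul_neg] using norm_exp_I_mul_ofReal (-t)

theorem Complex.norm_exp_ofReal_le_one {t : ℝ} (ht : t ≤ 0) : ‖exp (t : ℂ)‖ ≤ 1 := by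
  rw [norm_exp_ofReal]
  exact Real.exp_le_one_iff.2 ht

theorem intervalIntegral.integral_nonpos_of_forall {f : ℝ → ℝ} {a b : ℝ} (hab : a ≤ b)
    (hf : ∀ s, f s ≤ 0) : ∫ s in a..b, f s ≤ 0 := by
  rw [intervalIntegral.integral_of_le hab]
  exact integral_nonpos hf

theorem kinetic_second_moment_limit_general (d : ℕ)
    (z k₀ θ β : ℝ) (hz : 0 < z) (hβ : 1 < β)
    (Q : (Fin d → ℝ) → ℝ) (hQc : Continuous Q) (hQ : ∀ x, Q x ≤ 0)
    (Γhat : (Fin d → ℝ) × (Fin d → ℝ) → ℂ) (hΓ : Integrable Γhat)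
    (r x y : Fin d → ℝ) :
    Tendsto (fun ε : ℝ =>
        (1 / (2 * Real.pi) ^ (2 * d)) *
          ∫ q : (Fin d → ℝ) × (Fin d → ℝ),
            Γhat q * Complex.exp (Complex.I * ((q.1 ⬝ᵥ r : ℝ) : ℂ)) *
            Complex.exp (Complex.I * ((ε ^ β * (q.2 ⬝ᵥ (x - y)) / θ : ℝ) : ℂ)) *
            Complex.exp (Complex.I * ((ε ^ β * (q.1 ⬝ᵥ (x + y)) / 2 : ℝ) : ℂ)) *
            Complex.exp (-Complex.I *
              ((z * ε ^ (2 * β - 1) * (q.2 ⬝ᵥ q.1) / (k₀ * θ) : ℝ) : ℂ)) *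
            Complex.exp ((((k₀ ^ 2 * z / 4) *
              ∫ s in (0:ℝ)..1, Q (y - x + (ε ^ (β - 1) * s * z / k₀) • q.1) : ℝ) : ℂ)))
      (nhdsWithin 0 (Set.Ioi 0))
      (nhds (((1 / (2 * Real.pi) ^ (2 * d)) *
          ∫ q : (Fin d → ℝ) × (Fin d → ℝ),
            Γhat q * Complex.exp (Complex.I * ((q.1 ⬝ᵥ r : ℝ) : ℂ))) *
        Complex.exp (((k₀ ^ 2 * z / 4 * Q (y - x) : ℝ) : ℂ)))) := by
  have hβ₀ : 0 < β - 1 := by linarith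
  have hcont₁ : Continuous fun ε : ℝ => ε ^ β := Real.continuous_rpow_const (by linarith)
  have hcont₂ : Continuous fun ε : ℝ => ε ^ (2 * β - 1) := Real.continuous_rpow_const (by linarith)
  have hcont₃ : Continuous fun ε : ℝ => ε ^ (β - 1) := Real.continuous_rpow_const hβ₀.le
  rw [mul_assoc, ← integral_mul_const]
  simp only [mul_assoc]
  refine ((tendsto_integral_mul_of_norm_le_one hΓ (fun ε => by fun_prop) (fun ε q => ?_)
    (fun q => ?_)).const_mul _).mono_left nhdsWithin_le_nhds
  · simp only [norm_mul, Complex.norm_exp_I_mul_ofReal, Complex.norm_exp_neg_I_mul_ofReal, one_mul]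
    exact Complex.norm_exp_ofReal_le_one <| mul_nonpos_of_nonneg_of_nonpos
      (div_nonneg (mul_nonneg (sq_nonneg k₀) hz.le) zero_le_four)
      (intervalIntegral.integral_nonpos_of_forall zero_le_one fun s => hQ _)
  · refine (?_ : Continuous _).tendsto' 0 _ ?_
    · fun_prop
    · simp [Real.zero_rpow (by linarith : β ≠ 0), Real.zero_rpow hβ₀.ne',
        Real.zero_rpow (by linarith : 2 * β - 1 ≠ 0)]

/-- Kinetic-regime (`η = 1`) limit of the rescaled second moment of the wave field for a
broad partially coherent source with `β > 1`: the limit is `Γ(r,0) exp((k₀²z/4)Q(y−x))`. -/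
theorem kinetic_second_moment_limit (d : ℕ) (hd : 1 ≤ d)
    (z k₀ θ β : ℝ) (hz : 0 < z) (hk : 0 < k₀) (hθ : 0 < θ) (hθ1 : θ ≤ 1) (hβ : 1 < β)
    (Q : (Fin d → ℝ) → ℝ) (hQc : Continuous Q) (hQ : ∀ x, Q x ≤ 0)
    (Γhat : (Fin d → ℝ) × (Fin d → ℝ) → ℂ) (hΓ : Integrable Γhat)
    (r x y : Fin d → ℝ) :
    Tendsto (fun ε : ℝ =>
        (1 / (2 * Real.pi) ^ (2 * d)) *
          ∫ q : (Fin d → ℝ) × (Fin d → ℝ),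
            Γhat q * Complex.exp (Complex.I * ((q.1 ⬝ᵥ r : ℝ) : ℂ)) *
            Complex.exp (Complex.I * ((ε ^ β * (q.2 ⬝ᵥ (x - y)) / θ : ℝ) : ℂ)) *
            Complex.exp (Complex.I * ((ε ^ β * (q.1 ⬝ᵥ (x + y)) / 2 : ℝ) : ℂ)) *
            Complex.exp (-Complex.I *
              ((z * ε ^ (2 * β - 1) * (q.2 ⬝ᵥ q.1) / (k₀ * θ) : ℝ) : ℂ)) *
            Complex.exp ((((k₀ ^ 2 * z / 4) *
              ∫ s in (0:ℝ)..1, Q (y - x + (ε ^ (β - 1) * s * z / k₀) • q.1) : ℝ) : ℂ)))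
      (nhdsWithin 0 (Set.Ioi 0))
      (nhds (((1 / (2 * Real.pi) ^ (2 * d)) *
          ∫ q : (Fin d → ℝ) × (Fin d → ℝ),
            Γhat q * Complex.exp (Complex.I * ((q.1 ⬝ᵥ r : ℝ) : ℂ))) *
        Complex.exp (((k₀ ^ 2 * z / 4 * Q (y - x) : ℝ) : ℂ)))) :=
  kinetic_second_moment_limit_general d z k₀ θ β hz hβ Q hQc hQ Γhat hΓ r x y
end

section
/- Let d ≥ 1, z > 0, k₀ > 0, θ > 0. Let R ∈ C²(ℝ^d, ℝ) attain its global maximum at 0, with Hessian Ξ = ∇²R(0). Let Γ̂ ∈ L¹(ℝ^{2d}, ℂ), and let η : (0,1) → (0,∞) satisfy η(ε) → 0 as ε → 0⁺. Then for all r, x, y ∈ ℝ^d, lim_{ε→0⁺} ∫_{ℝ^{2d}} Γ̂(ζ,ξ) exp(i r·ζ) exp(i η(ε) ε ξ·(x−y)/θ) exp(i η(ε) ε ζ·(x+y)/2) exp(−i z η(ε) ε ξ·ζ/(k₀θ)) exp( (k₀²z/(4η(ε)²)) ∫_0^1 [ R(η(ε)(y − x + (sz/k₀)ζ)) − R(0)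 ] ds ) dξ dζ/(2π)^{2d} = ∫_{ℝ^{2d}} Γ̂(ζ,ξ) exp(i r·ζ) exp( (k₀²z/8) ∫_0^1 (y − x + (sz/k₀)ζ)ᵀ Ξ (y − x + (sz/k₀)ζ) ds ) dξ dζ/(2π)^{2d}. -/
/-!
Since `R` is maximal at `0`, `∇R(0) = 0`, so `R(w) - R(0) = O(‖w‖²)` and, by a second-order Taylor
expansion, `(R(η v) - R(0)) / η² → ∇²R(0)(v, v) / 2`; the `O(‖w‖²)` bound is uniform for `v` in a
compact set, so dominated convergence in `s` gives the limit of the exponent. Because `R ≤ R(0)`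
that exponent is nonpositive, and the remaining factors have modulus one, so `‖Γ̂‖` dominates the
`(ζ, ξ)`-integrand and dominated convergence applies again, the phases `exp(i η ε ⋯)` tending to `1`.
-/

open MeasureTheory Filter Matrix Topology Asymptotics

section SecondOrder

variable {E : Type*} [NormedAddCommGroup E] [NormedSpace ℝ E] {R : E → ℝ}

theorem tendsto_sub_div_sq_of_fderiv_eq_zero (hR : ContDiff ℝ 2 R) (hR0 : fderiv ℝ R 0 = 0)
    (v : E) :
    Tendsto (fun h : ℝ => (R (h • v) - R 0) / h ^ 2) (𝓝[≠] 0)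
      (𝓝 (fderiv ℝ (fderiv ℝ R) 0 v v / 2)) := by
  have hR' : Differentiable ℝ (fderiv ℝ R) := (hR.fderiv_right le_rfl).differentiable one_ne_zero
  have hline : ∀ h : ℝ, HasDerivAt (fun t : ℝ => t • v) v h := fun h => by
    simpa using (hasDerivAt_id h).smul_const v
  have hderiv : ∀ h : ℝ, HasDerivAt (fun t => R (t • v) - R 0) (fderiv ℝ R (h • v) v) h :=
    fun h => (((hR.differentiable two_ne_zero) _).hasFDerivAt.comp_hasDerivAt h
      (hline h)).sub_const _
  have hderiv' : HasDerivAt (fun t : ℝ => fderiv ℝ R (t • v) v)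
      (fderiv ℝ (fderiv ℝ R) 0 v v) 0 := by
    have h0 : HasFDerivAt (fderiv ℝ R) (fderiv ℝ (fderiv ℝ R) 0) ((0 : ℝ) • v) := by
      simpa using (hR' 0).hasFDerivAt
    exact (ContinuousLinearMap.apply ℝ ℝ v).hasFDerivAt.comp_hasDerivAt 0
      (h0.comp_hasDerivAt 0 (hline 0))
  have hslope : Tendsto (fun h : ℝ => fderiv ℝ R (h • v) v / h) (𝓝[≠] 0)
      (𝓝 (fderiv ℝ (fderiv ℝ R) 0 v v)) :=
    (hasDerivAt_iff_tendsto_slope.mp hderiv').congr fun h => by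
      simp [slope, hR0, div_eq_inv_mul]
  have hcont : Continuous fun h : ℝ => R (h • v) - R 0 := by
    have := hR.continuous
    fun_prop
  refine HasDerivAt.lhopital_zero_nhdsNE (.of_forall hderiv)
    (.of_forall fun h => by simpa using hasDerivAt_pow 2 h) ?_ ?_ ?_ ?_
  · filter_upwards [self_mem_nhdsWithin] with h hh using mul_ne_zero two_ne_zero hh
  · simpa using (hcont.tendsto 0).mono_left nhdsWithin_le_nhds
  · simpa using ((continuous_pow 2).tendsto (0 : ℝ)).mono_left nhdsWithin_le_nhds
  · convert hslope.div_const 2 using 2 with h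
    field_simp

theorem isBigO_sub_sq_of_fderiv_eq_zero (hR : ContDiff ℝ 2 R) (hR0 : fderiv ℝ R 0 = 0) :
    (fun w => R w - R 0) =O[𝓝 0] fun w => ‖w‖ ^ 2 := by
  have hR' : Differentiable ℝ (fderiv ℝ R) := (hR.fderiv_right le_rfl).differentiable one_ne_zero
  obtain ⟨C, hC0, hC⟩ := (hR' 0).isBigO_sub.exists_nonneg
  obtain ⟨δ, hδ, hball⟩ := Metric.eventually_nhds_iff_ball.mp hC.bound
  refine IsBigO.of_bound C ?_
  filter_upwards [Metric.ball_mem_nhds 0 hδ] with w hw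
  have hsub : Metric.closedBall (0 : E) ‖w‖ ⊆ Metric.ball 0 δ :=
    Metric.closedBall_subset_ball (by simpa using hw)
  have hmv := (convex_closedBall (0 : E) ‖w‖).norm_image_sub_le_of_norm_fderiv_le
    (fun p _ => (hR.differentiable two_ne_zero).differentiableAt) (C := C * ‖w‖)
    (fun p hp => by
      have := hball p (hsub hp)
      simp only [hR0, sub_zero] at this
      exact this.trans (by gcongr; simpa using hp))
    (Metric.mem_closedBall_self (norm_nonneg w)) (y := w) (by simp)
  simpa [sq, mul_assoc] using hmv

theorem tendsto_integral_sub_div_sq (hR : ContDiff ℝ 2 R) (hR0 : fderiv ℝ R 0 = 0)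
    {v : ℝ → E} (hv : Continuous v) (a b : ℝ) :
    Tendsto (fun h : ℝ => ∫ s in a..b, (R (h • v s) - R 0) / h ^ 2) (𝓝[≠] 0)
      (𝓝 (∫ s in a..b, fderiv ℝ (fderiv ℝ R) 0 (v s) (v s) / 2)) := by
  obtain ⟨C, hC⟩ := (isBigO_sub_sq_of_fderiv_eq_zero hR hR0).bound
  -- compactness of `[a, b]` makes the quadratic bound near `0` uniform in `s`
  have hsmall : ∀ᶠ h in 𝓝 (0 : ℝ), ∀ s ∈ Set.uIcc a b,
      ‖R (h • v s) - R 0‖ ≤ C * ‖‖h • v s‖ ^ 2‖ :=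
    isCompact_uIcc.eventually_forall_of_forall_eventually fun s _ => by
      have : Tendsto (fun p : ℝ × ℝ => p.1 • v p.2) (𝓝 (0, s)) (𝓝 0) := by
        simpa using (by fun_prop : Continuous fun p : ℝ × ℝ => p.1 • v p.2).tendsto (0, s)
      exact this.eventually hC
  have hcont : ∀ h : ℝ, Continuous fun s => (R (h • v s) - R 0) / h ^ 2 := fun h => by
    have := hR.continuous
    fun_prop
  refine intervalIntegral.tendsto_integral_filter_of_dominated_convergence
    (fun s => C * ‖v s‖ ^ 2) (.of_forall fun h => (hcont h).aestronglyMeasurable) ?_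
    ((by fun_prop : Continuous fun s => C * ‖v s‖ ^ 2).intervalIntegrable a b)
    (.of_forall fun s _ => tendsto_sub_div_sq_of_fderiv_eq_zero hR hR0 (v s))
  filter_upwards [self_mem_nhdsWithin, nhdsWithin_le_nhds hsmall] with h (hh : h ≠ 0) hs
  refine .of_forall fun s hs' => ?_
  have hh2 : 0 < h ^ 2 := by positivity
  calc ‖(R (h • v s) - R 0) / h ^ 2‖ = ‖R (h • v s) - R 0‖ / h ^ 2 := by
        rw [norm_div, Real.norm_of_nonneg hh2.le]
    _ ≤ C * ‖‖h • v s‖ ^ 2‖ / h ^ 2 := by gcongr; exact hs s (Set.uIoc_subset_uIcc hs')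
    _ = C * ‖v s‖ ^ 2 := by
        rw [norm_pow, norm_norm, norm_smul, Real.norm_eq_abs, mul_pow, sq_abs]
        field_simp

theorem tendsto_div_four_mul_sq_mul_integral_sub (hR : ContDiff ℝ 2 R)
    (hR0 : fderiv ℝ R 0 = 0) {v : ℝ → E} (hv : Continuous v) (c a b : ℝ) {α : Type*}
    {l : Filter α} {η : α → ℝ} (hη : Tendsto η l (𝓝[≠] 0)) :
    Tendsto (fun t => c / (4 * η t ^ 2) * ∫ s in a..b, (R (η t • v s) - R 0)) l
      (𝓝 (c / 8 * ∫ s in a..b, fderiv ℝ (fderiv ℝ R) 0 (v s) (v s))) := by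
  convert ((tendsto_integral_sub_div_sq hR hR0 hv a b).comp hη).const_mul (c / 4) using 2
  · simp only [Function.comp_apply, intervalIntegral.integral_div]
    field_simp
  · rw [intervalIntegral.integral_div]
    ring

end SecondOrder

theorem Complex.tendsto_exp_mul_ofReal_nhds_one {α : Type*} {l : Filter α} {f : α → ℝ}
    (hf : Tendsto f l (𝓝 0)) (c : ℂ) :
    Tendsto (fun a => Complex.exp (c * f a)) l (𝓝 1) := by
  simpa [Function.comp_def] using
    ((by fun_prop : Continuous fun t : ℝ => Complex.exp (c * t)).tendsto 0).comp hf

theorem tendsto_mul_cexp_phases_mul_cexp {α : Type*} {l : Filter α} {a b c m : α → ℝ} {M : ℝ}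
    (A : ℂ) (ha : Tendsto a l (𝓝 0)) (hb : Tendsto b l (𝓝 0)) (hc : Tendsto c l (𝓝 0))
    (hm : Tendsto m l (𝓝 M)) :
    Tendsto (fun t => A * Complex.exp (Complex.I * a t) * Complex.exp (Complex.I * b t) *
      Complex.exp (-Complex.I * c t) * Complex.exp (m t)) l (𝓝 (A * Complex.exp M)) := by
  have := (((tendsto_const_nhds (x := A)).mul
    (Complex.tendsto_exp_mul_ofReal_nhds_one ha Complex.I)).mul
    (Complex.tendsto_exp_mul_ofReal_nhds_one hb Complex.I)).mul
    (Complex.tendsto_exp_mul_ofReal_nhds_one hc (-Complex.I)) |>.mul hm.ofReal.cexp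
  rwa [mul_one, mul_one, mul_one] at this

theorem diffusive_second_moment_limit_general (d : ℕ)
    (z k₀ θ : ℝ) (hz : 0 < z)
    (R : (Fin d → ℝ) → ℝ) (hR : ContDiff ℝ 2 R) (hmax : ∀ x : Fin d → ℝ, R x ≤ R 0)
    (Γhat : (Fin d → ℝ) × (Fin d → ℝ) → ℂ) (hΓ : Integrable Γhat)
    (η : ℝ → ℝ) (hηpos : ∀ ε : ℝ, 0 < ε → ε < 1 → 0 < η ε)
    (hηlim : Tendsto η (nhdsWithin 0 (Set.Ioi 0)) (nhds 0))
    (r x y : Fin d → ℝ) :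
    Tendsto (fun ε : ℝ =>
        (1 / (2 * Real.pi) ^ (2 * d)) *
          ∫ q : (Fin d → ℝ) × (Fin d → ℝ),
            Γhat q * Complex.exp (Complex.I * ((q.1 ⬝ᵥ r : ℝ) : ℂ)) *
            Complex.exp (Complex.I * ((η ε * ε * (q.2 ⬝ᵥ (x - y)) / θ : ℝ) : ℂ)) *
            Complex.exp (Complex.I * ((η ε * ε * (q.1 ⬝ᵥ (x + y)) / 2 : ℝ) : ℂ)) *
            Complex.exp (-Complex.I *
              ((z * η ε * ε * (q.2 ⬝ᵥ q.1) / (k₀ * θ) : ℝ) : ℂ)) *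
            Complex.exp ((((k₀ ^ 2 * z / (4 * (η ε) ^ 2)) *
              ∫ s in (0:ℝ)..1,
                (R (η ε • (y - x + (s * z / k₀) • q.1)) - R 0) : ℝ) : ℂ)))
      (nhdsWithin 0 (Set.Ioi 0))
      (nhds ((1 / (2 * Real.pi) ^ (2 * d)) *
          ∫ q : (Fin d → ℝ) × (Fin d → ℝ),
            Γhat q * Complex.exp (Complex.I * ((q.1 ⬝ᵥ r : ℝ) : ℂ)) *
            Complex.exp ((((k₀ ^ 2 * z / 8) *
              ∫ s in (0:ℝ)..1,
                fderiv ℝ (fderiv ℝ R) 0 (y - x + (s * z / k₀) • q.1)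
                  (y - x + (s * z / k₀) • q.1) : ℝ) : ℂ)))) := by
  have hR0 : fderiv ℝ R 0 = 0 := IsLocalMax.fderiv_eq_zero (.of_forall hmax)
  have hη : Tendsto η (𝓝[>] 0) (𝓝[≠] 0) := tendsto_nhdsWithin_iff.mpr ⟨hηlim, by
    filter_upwards [Ioo_mem_nhdsGT one_pos] with ε hε using (hηpos ε hε.1 hε.2).ne'⟩
  have hηε : Tendsto (fun ε => η ε * ε) (𝓝[>] 0) (𝓝 0) := by
    simpa using hηlim.mul (nhdsWithin_le_nhds (a := (0 : ℝ)))
  have hcR := hR.continuous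
  refine .const_mul _ (tendsto_integral_filter_of_dominated_convergence (fun q => ‖Γhat q‖)
    (.of_forall fun ε => ?_) (.of_forall fun ε => .of_forall fun q => ?_) hΓ.norm
    (.of_forall fun q => ?_))
  · simp only [dotProduct]
    refine .mul (.mul (.mul (.mul (.mul hΓ.1 ?_) ?_) ?_) ?_) ?_ <;>
      exact Continuous.aestronglyMeasurable (by fun_prop)
  · have hexp : k₀ ^ 2 * z / (4 * η ε ^ 2) *
        ∫ s in (0:ℝ)..1, (R (η ε • (y - x + (s * z / k₀) • q.1)) - R 0) ≤ 0 := by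
      refine mul_nonpos_of_nonneg_of_nonpos (by positivity) ?_
      rw [intervalIntegral.integral_of_le zero_le_one]
      exact integral_nonpos fun s => sub_nonpos.2 (hmax _)
    simp only [norm_mul, Complex.norm_exp, Complex.mul_re, Complex.I_re, Complex.I_im,
      Complex.ofReal_re, Complex.ofReal_im, Complex.neg_re, Complex.neg_im, zero_mul,
      neg_zero, mul_zero, sub_zero, Real.exp_zero, mul_one]
    exact mul_le_of_le_one_right (norm_nonneg _) (Real.exp_le_one_iff.mpr hexp)
  · refine tendsto_mul_cexp_phases_mul_cexp _ ?_ ?_ ?_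
      (tendsto_div_four_mul_sq_mul_integral_sub hR hR0 (by fun_prop) _ 0 1 hη)
    · simpa using (hηε.mul_const _).div_const θ
    · simpa using (hηε.mul_const _).div_const 2
    · simpa [mul_assoc] using ((hηε.const_mul z).mul_const _).div_const (k₀ * θ)

/-- Diffusive-regime (`η → 0`) limit of the rescaled second moment of the wave field for a
partially coherent source with `β = 1`: the limiting moment depends on the medium only
through the Hessian `Ξ = ∇²R(0)` of its covariance at `0`. -/
theorem diffusive_second_moment_limit (d : ℕ) (hd : 1 ≤ d)
    (z k₀ θ : ℝ) (hz : 0 < z) (hk : 0 < k₀) (hθ : 0 < θ)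
    (R : (Fin d → ℝ) → ℝ) (hR : ContDiff ℝ 2 R) (hmax : ∀ x : Fin d → ℝ, R x ≤ R 0)
    (Γhat : (Fin d → ℝ) × (Fin d → ℝ) → ℂ) (hΓ : Integrable Γhat)
    (η : ℝ → ℝ) (hηpos : ∀ ε : ℝ, 0 < ε → ε < 1 → 0 < η ε)
    (hηlim : Tendsto η (nhdsWithin 0 (Set.Ioi 0)) (nhds 0))
    (r x y : Fin d → ℝ) :
    Tendsto (fun ε : ℝ =>
        (1 / (2 * Real.pi) ^ (2 * d)) *
          ∫ q : (Fin d → ℝ) × (Fin d → ℝ),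
            Γhat q * Complex.exp (Complex.I * ((q.1 ⬝ᵥ r : ℝ) : ℂ)) *
            Complex.exp (Complex.I * ((η ε * ε * (q.2 ⬝ᵥ (x - y)) / θ : ℝ) : ℂ)) *
            Complex.exp (Complex.I * ((η ε * ε * (q.1 ⬝ᵥ (x + y)) / 2 : ℝ) : ℂ)) *
            Complex.exp (-Complex.I *
              ((z * η ε * ε * (q.2 ⬝ᵥ q.1) / (k₀ * θ) : ℝ) : ℂ)) *
            Complex.exp ((((k₀ ^ 2 * z / (4 * (η ε) ^ 2)) *
              ∫ s in (0:ℝ)..1,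
                (R (η ε • (y - x + (s * z / k₀) • q.1)) - R 0) : ℝ) : ℂ)))
      (nhdsWithin 0 (Set.Ioi 0))
      (nhds ((1 / (2 * Real.pi) ^ (2 * d)) *
          ∫ q : (Fin d → ℝ) × (Fin d → ℝ),
            Γhat q * Complex.exp (Complex.I * ((q.1 ⬝ᵥ r : ℝ) : ℂ)) *
            Complex.exp ((((k₀ ^ 2 * z / 8) *
              ∫ s in (0:ℝ)..1,
                fderiv ℝ (fderiv ℝ R) 0 (y - x + (s * z / k₀) • q.1)
                  (y - x + (s * z / k₀) • q.1) : ℝ) : ℂ)))) :=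
  diffusive_second_moment_limit_general d z k₀ θ hz R hR hmax Γhat hΓ η hηpos hηlim r x y
end
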